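/- arXiv:1304.5007 — 5 statements merged into one kernel-verified Lean document; each statement's English description precedes it below -/
import Mathlib

section
/- There is a universal constant C such that for every q ≥ 2 and every 0 < ε ≤ 1, the set 𝒮_q of q-outcome rank-one single-qubit POVMs admits an ε-net with respect to the metric t of cardinality at most (C/ε)^{3q}; equivalently N(𝒮_q, t, ε) ≤ (C/ε)^{3q}. -/
open scoped BigOperators ComplexOrder

noncomputable section

namespace IQ

/-- |α₀₀⟩ = |0⟩ -/
def ket00 : Fin 2 → ℂ := ![1, 0]
/-- |α₁₁⟩ = |1⟩ -/
def ket11 : Fin 2 → ℂ := ![0, 1]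
/-- |α₀₁⟩ = |+⟩ -/
def ketP : Fin 2 → ℂ := ![((Real.sqrt 2 : ℝ) : ℂ)⁻¹, ((Real.sqrt 2 : ℝ) : ℂ)⁻¹]
/-- |α₁₀⟩ = |−⟩ -/
def ketM : Fin 2 → ℂ := ![((Real.sqrt 2 : ℝ) : ℂ)⁻¹, -((Real.sqrt 2 : ℝ) : ℂ)⁻¹]

/-- the single-qubit states |α_{bc}⟩ -/
def alpha (b c : Fin 2) : Fin 2 → ℂ :=
  if b = c then (if b = 0 then ket00 else ket11)
  else (if b = 0 then ketP else ketM)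

/-- ⟨ψ| M |ψ⟩ (real part) -/
def expVal (M : Matrix (Fin 2) (Fin 2) ℂ) (ψ : Fin 2 → ℂ) : ℝ :=
  (dotProduct (star ψ) (M.mulVec ψ)).re

/-- A 1-pass LOCC strategy with `q`-outcome measurements on `n` isolated qubits:
an adaptive decision tree which, at step `a`, given the previous outcomes,
chooses a not-yet-measured qubit and a single-qubit POVM with `q` outcomes. -/
structure Strategy (n q : ℕ) where
  qubit : (a : Fin n) → (Fin a.val → Fin q) → Fin n
  povm : (a : Fin n) → (Fin a.val → Fin q) → Fin q → Matrix (Fin 2) (Fin 2) ℂ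
  povm_psd : ∀ a z ζ, (povm a z ζ).PosSemidef
  povm_sum : ∀ a z, ∑ ζ, povm a z ζ = 1
  onePass : ∀ z : Fin n → Fin q,
    Function.Injective (fun a : Fin n => qubit a (fun i => z (Fin.castLE a.isLt.le i)))

/-- the prefix z_{<a} of an outcome string -/
def pre {m q : ℕ} (z : Fin m → Fin q) (a : Fin m) : Fin a.val → Fin q :=
  fun i => z (Fin.castLE a.isLt.le i)

/-- Pr[Z = z] when the strategy `M` is applied to the product state `⊗ᵢ ψᵢ`. -/
def outcomeProb {n q : ℕ} (M : Strategy n q) (ψ : Fin n → Fin 2 → ℂ) (z : Fin n → Fin q) : ℝ :=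
  ∏ a : Fin n, expVal (M.povm a (pre z a) (z a)) (ψ (M.qubit a (pre z a)))

/-- probability of the outcomes of the first `m` steps of a strategy -/
def prefixProb {n q : ℕ} (M : Strategy n q) (ψ : Fin n → Fin 2 → ℂ) {m : ℕ} (hm : m ≤ n)
    (z : Fin m → Fin q) : ℝ :=
  ∏ a : Fin m, expVal (M.povm (Fin.castLE hm a) (pre z a) (z a))
    (ψ (M.qubit (Fin.castLE hm a) (pre z a)))

/-- the product state |E(u)⟩, as the list of its single-qubit factors -/
def stateOf {n nt : ℕ} (E : (Fin nt → Fin 2) → Fin n → Fin 2 × Fin 2) (u : Fin nt → Fin 2) :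
    Fin n → Fin 2 → ℂ :=
  fun a => alpha (E u a).1 (E u a).2

/-- Shannon entropy (in bits) of a finitely supported distribution -/
def shannon {σ : Type*} [Fintype σ] (p : σ → ℝ) : ℝ :=
  ∑ x, -(p x * Real.logb 2 (p x))

/-- mutual information I(Z;U) = H(Z) + H(U) − H(Z,U) of a joint distribution
`P z u = Pr[Z = z, U = u]` -/
def mutualInfo {σ τ : Type*} [Fintype σ] [Fintype τ] (P : σ → τ → ℝ) : ℝ :=
  shannon (fun z => ∑ u, P z u) + shannon (fun u => ∑ z, P z u)
    - shannon (fun p : σ × τ => P p.1 p.2)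

/-- conditional entropy H(U|Z) = H(Z,U) − H(Z) of a joint distribution -/
def condEnt {σ τ : Type*} [Fintype σ] [Fintype τ] (P : σ → τ → ℝ) : ℝ :=
  shannon (fun p : σ × τ => P p.1 p.2) - shannon (fun z => ∑ u, P z u)

/-- collision (Rényi 2-) entropy of the normalization of a nonnegative weight function -/
def condH2 {σ : Type*} [Fintype σ] (w : σ → ℝ) : ℝ :=
  -Real.logb 2 (∑ u, (w u / ∑ v, w v)^2)

/-- η(x) = −x·lg x -/
def eta (x : ℝ) : ℝ := -(x * Real.logb 2 x)

/-- binary entropy function -/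
def binEnt (p : ℝ) : ℝ := -(p * Real.logb 2 p) - ((1-p) * Real.logb 2 (1-p))

/-- the joint distribution of (Z,U) in the state discrimination game:
U uniform on {0,1}^ñ, Z the output of strategy `M` on |E(U)⟩ -/
def gameDist {n nt q : ℕ} (M : Strategy n q)
    (E : (Fin nt → Fin 2) → Fin n → Fin 2 × Fin 2) :
    (Fin n → Fin q) → (Fin nt → Fin 2) → ℝ :=
  fun z u => ((2:ℝ)^nt)⁻¹ * outcomeProb M (stateOf E u) z

/-- probability of an event under the uniform distribution on a finite type -/
def prFin {α : Type*} [Fintype α] (P : α → Prop) : ℝ :=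
  haveI := Classical.decPred P
  ((Finset.univ.filter P).card : ℝ) / (Fintype.card α : ℝ)

/-- expectation of a function under the uniform distribution on a finite type -/
def expFin {α : Type*} [Fintype α] (f : α → ℝ) : ℝ :=
  (∑ a, f a) / (Fintype.card α : ℝ)

/-- operator norm of a matrix (largest singular value) -/
def opNormM {ι : Type*} [Fintype ι] [DecidableEq ι] (M : Matrix ι ι ℂ) : ℝ :=
  ‖Matrix.toEuclideanCLM (𝕜 := ℂ) M‖

/-- Frobenius norm of a matrix -/
def frobNorm {ι κ : Type*} [Fintype ι] [Fintype κ] (M : Matrix ι κ ℂ) : ℝ :=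
  Real.sqrt (∑ i, ∑ j, ‖M i j‖^2)

/-- the set 𝒮_q of q-outcome single-qubit POVMs all of whose elements have rank one -/
def Sq (q : ℕ) : Set (Fin q → Matrix (Fin 2) (Fin 2) ℂ) :=
  {M | (∀ i, (M i).PosSemidef ∧ (M i).rank = 1) ∧ ∑ i, M i = 1}

/-- the metric t(M, M̃) = maxᵢ ‖Mᵢ − M̃ᵢ‖ on 𝒮_q -/
def tDist {q : ℕ} (M M' : Fin q → Matrix (Fin 2) (Fin 2) ℂ) : ℝ :=
  ⨆ i, opNormM (M i - M' i)

/-- `L` is an ε-net for 𝒮_q with respect to the metric `tDist` -/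
def IsNet {q : ℕ} (L : Finset (Fin q → Matrix (Fin 2) (Fin 2) ℂ)) (ε : ℝ) : Prop :=
  ∀ M ∈ Sq q, ∃ M' ∈ L, tDist M M' ≤ ε

/-- the n-qubit product state |E(s,t)⟩ of the one-time memory, as the list of its factors -/
def otmState {n k : ℕ} (C D : (Fin k → Fin 2) → Fin n → Fin 2)
    (s t : Fin k → Fin 2) : Fin n → Fin 2 → ℂ :=
  fun a => alpha (C s a) (D t a)

/-- the joint distribution of (Z,(S,T)): S,T uniform on {0,1}^k,
Z the output of strategy `M` on |E(S,T)⟩ -/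
def otmGame {n k q : ℕ} (M : Strategy n q) (C D : (Fin k → Fin 2) → Fin n → Fin 2) :
    (Fin n → Fin q) → ((Fin k → Fin 2) × (Fin k → Fin 2)) → ℝ :=
  fun z st => ((4:ℝ)^k)⁻¹ * outcomeProb M (otmState C D st.1 st.2) z



end IQ

/-! A rank-one POVM element is `v vᴴ` for some `v ∈ ℂ²`, and after removing the global phase of `v`
its first coordinate is real, so `v = (x, z)` with `x ∈ ℝ`, `z ∈ ℂ`; since the diagonal of a POVM
element is at most `1`, the three real parameters `x, Re z, Im z` lie in `[-1, 1]`. As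
`‖v vᴴ - w wᴴ‖ ≤ (‖v‖ + ‖w‖) ‖v - w‖`, rounding them to a grid of step `1/N` moves `v vᴴ` by
`O(1/N)`, so the `(2N + 1)^{3q}` grid tuples are an external `O(1/N)`-cover of `𝒮_q`, and an
external `r`-cover gives an internal `2r`-cover which is no larger. -/

open Metric Set
open scoped NNReal Matrix.Norms.L2Operator
open Matrix

theorem Metric.exists_finset_subset_forall_dist_le_two_mul {X ι : Type*} [PseudoMetricSpace X]
    [Fintype ι] {A : Set X} (g : ι → X) (r : ℝ≥0) (hA : ∀ x ∈ A, ∃ i, dist x (g i) ≤ r) :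
    ∃ L : Finset X, ↑L ⊆ A ∧ L.card ≤ Fintype.card ι ∧ ∀ x ∈ A, ∃ y ∈ L, dist x y ≤ 2 * r := by
  classical
  have hcover : IsCover r A (range g) := fun x hx ↦
    let ⟨i, hi⟩ := hA x hx
    ⟨g i, mem_range_self i, edist_le_coe.2 (NNReal.coe_le_coe.1 hi)⟩
  have hrange : (range g).encard ≤ Fintype.card ι := by
    rw [← image_univ, ← Finset.coe_univ, ← Finset.coe_image, encard_coe_eq_coe_finsetCard]
    exact_mod_cast Finset.card_image_le
  have hcard : coveringNumber (2 * r) A ≤ Fintype.card ι :=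
    (coveringNumber_two_mul_le_externalCoveringNumber r A).trans
      (hcover.externalCoveringNumber_le_encard.trans hrange)
  obtain ⟨C, hCA, hC, hCcover, hCcard⟩ :=
    exists_set_encard_eq_coveringNumber (ne_top_of_le_ne_top (ENat.natCast_ne_top _) hcard)
  refine ⟨hC.toFinset, by simpa using hCA, ?_, fun x hx ↦ ?_⟩
  · rw [← ENat.natCast_le_natCast, ← hC.encard_eq_coe_toFinset_card, hCcard]
    exact hcard
  · obtain ⟨y, hy, hxy⟩ := hCcover hx
    exact ⟨y, hC.mem_toFinset.2 hy, by exact_mod_cast edist_le_coe.1 hxy⟩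

lemma EuclideanSpace.norm_toLp_fin_two_le {𝕜 : Type*} [RCLike 𝕜] (a b : 𝕜) :
    ‖!₂[a, b]‖ ≤ ‖a‖ + ‖b‖ := by
  rw [EuclideanSpace.norm_eq, Fin.sum_univ_two]
  exact Real.sqrt_le_iff.2 ⟨by positivity, by simp; nlinarith [norm_nonneg a, norm_nonneg b]⟩

lemma Matrix.l2_opNorm_vecMulVec_star {𝕜 n : Type*} [RCLike 𝕜] [Fintype n] [DecidableEq n]
    (x y : EuclideanSpace 𝕜 n) : ‖vecMulVec (⇑x) (star ⇑y)‖ = ‖x‖ * ‖y‖ := by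
  rw [← InnerProductSpace.symm_toEuclideanLin_rankOne, l2_opNorm_def, LinearEquiv.trans_apply,
    LinearEquiv.apply_symm_apply,
    show LinearMap.toContinuousLinearMap (InnerProductSpace.rankOne 𝕜 x y : _ →ₗ[𝕜] _) =
      InnerProductSpace.rankOne 𝕜 x y from ContinuousLinearMap.ext fun _ ↦ rfl]
  exact InnerProductSpace.norm_rankOne x y

lemma Matrix.l2_opNorm_vecMulVec_star_sub_le {𝕜 n : Type*} [RCLike 𝕜] [Fintype n]
    [DecidableEq n] (v w : EuclideanSpace 𝕜 n) :
    ‖vecMulVec (⇑v) (star ⇑v) - vecMulVec (⇑w) (star ⇑w)‖ ≤ (‖v‖ + ‖w‖) * ‖v - w‖ := by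
  have hsplit : vecMulVec (⇑v) (star ⇑v) - vecMulVec (⇑w) (star ⇑w) =
      vecMulVec (⇑v) (star ⇑(v - w)) + vecMulVec (⇑(v - w)) (star ⇑w) := by
    simp only [WithLp.ofLp_sub, star_sub, vecMulVec_sub, sub_vecMulVec]
    abel
  calc _ ≤ ‖v‖ * ‖v - w‖ + ‖v - w‖ * ‖w‖ := by
        rw [hsplit, ← l2_opNorm_vecMulVec_star, ← l2_opNorm_vecMulVec_star]
        exact norm_add_le _ _
    _ = (‖v‖ + ‖w‖) * ‖v - w‖ := by ring

lemma Matrix.det_eq_zero_of_rank_lt {n K : Type*} [Fintype n] [DecidableEq n] [CommRing K]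
    [IsDomain K]
    {A : Matrix n n K} (h : A.rank < Fintype.card n) : A.det = 0 := by
  by_contra hA
  exact h.ne (rank_of_det_ne_zero hA)

lemma Matrix.PosSemidef.re_apply_le_one_of_sum_eq_one {ι n : Type*} [Fintype ι] [Fintype n]
    [DecidableEq n] {M : ι → Matrix n n ℂ} (hM : ∀ i, (M i).PosSemidef) (hsum : ∑ i, M i = 1)
    (i : ι) (j : n) : (M i j j).re ≤ 1 := by
  have hdiag : ∑ k, (M k j j).re = 1 := by
    simpa [Matrix.sum_apply] using congrArg Complex.re (congrFun (congrFun hsum j) j)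
  rw [← hdiag]
  exact Finset.single_le_sum (fun k _ ↦ (Complex.nonneg_iff.1 ((hM k).diag_nonneg)).1)
    (Finset.mem_univ i)

lemma Matrix.PosSemidef.exists_eq_vecMulVec_of_det_eq_zero {M : Matrix (Fin 2) (Fin 2) ℂ}
    (hM : M.PosSemidef) (hdet : M.det = 0) :
    ∃ (x : ℝ) (z : ℂ), M = vecMulVec ![(x : ℂ), z] (star ![(x : ℂ), z]) := by
  obtain ⟨ha, ha'⟩ := Complex.nonneg_iff.1 (hM.diag_nonneg (i := 0))
  obtain ⟨hd, hd'⟩ := Complex.nonneg_iff.1 (hM.diag_nonneg (i := 1))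
  set a := (M 0 0).re
  set d := (M 1 1).re
  have h00 : M 0 0 = a := Complex.ext rfl ha'.symm
  have h11 : M 1 1 = d := Complex.ext rfl hd'.symm
  have h01 : M 0 1 = star (M 1 0) := (hM.1.apply 0 1).symm
  have hnorm : ‖M 1 0‖ = √a * √d := by
    have : M 0 1 * M 1 0 = (a * d : ℝ) := by
      rw [det_fin_two, h00, h11] at hdet; push_cast; linear_combination -hdet
    rw [h01, Complex.star_def, ← Complex.normSq_eq_conj_mul_self, Complex.ofReal_inj] at this
    rw [Complex.norm_def, this, Real.sqrt_mul ha]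
  set z : ℂ := (√d : ℂ) * Complex.exp (Complex.arg (M 1 0) * Complex.I)
  have h10 : M 1 0 = z * √a := by
    rw [← Complex.norm_mul_exp_arg_mul_I (M 1 0), hnorm]; push_cast; ring
  refine ⟨√a, z, ?_⟩
  ext i j
  fin_cases i <;> fin_cases j
  · simp [vecMulVec_apply, h00, ← Complex.ofReal_mul, Real.mul_self_sqrt ha]
  · simp [vecMulVec_apply, h01, h10, mul_comm]
  · simp [vecMulVec_apply, h10]
  · have hz : ‖z‖ = √d := by simp [z, Complex.norm_exp_ofReal_mul_I]
    simp [vecMulVec_apply, h11, Complex.mul_conj, Complex.normSq_eq_norm_sq, hz, hd]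

namespace IQ

lemma tDist_eq_dist {q : ℕ} (M M' : Fin q → Matrix (Fin 2) (Fin 2) ℂ) :
    tDist M M' = dist M M' := by
  refine le_antisymm (Real.iSup_le (fun i ↦ ?_) dist_nonneg) ?_
  · rw [opNormM, ← cstar_norm_def, ← dist_eq_norm]; exact dist_le_pi_dist M M' i
  · refine (dist_pi_le_iff (Real.iSup_nonneg fun i ↦ norm_nonneg _)).2 fun i ↦ ?_
    rw [dist_eq_norm]
    exact le_ciSup (f := fun i ↦ opNormM (M i - M' i)) (finite_range _).bddAbove i

def gridPt (N j : ℕ) : ℝ := j / N - 1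

lemma abs_gridPt_le {N : ℕ} (j : Fin (2 * N + 1)) : |gridPt N j| ≤ 1 := by
  have hj : (j : ℝ) ≤ 2 * N := by exact_mod_cast Nat.lt_succ_iff.1 j.isLt
  have hjN : (j : ℝ) / N ≤ 2 := div_le_of_le_mul₀ (Nat.cast_nonneg _) zero_le_two hj
  rw [gridPt, abs_le]
  constructor <;> linarith [div_nonneg (Nat.cast_nonneg (α := ℝ) j) (Nat.cast_nonneg N)]

lemma exists_abs_sub_gridPt_le {N : ℕ} (hN : 0 < N) {x : ℝ} (hx : |x| ≤ 1) :
    ∃ j : Fin (2 * N + 1), |x - gridPt N j| ≤ 1 / N := by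
  obtain ⟨hx₀, hx₁⟩ := abs_le.1 hx
  have hN' : (0 : ℝ) < N := Nat.cast_pos.2 hN
  set j := ⌊(x + 1) * N⌋₊
  have hj : (j : ℝ) ≤ (x + 1) * N := Nat.floor_le (by nlinarith)
  have hj' : (x + 1) * N < j + 1 := Nat.lt_floor_add_one _
  have hjlt : j < 2 * N + 1 := by
    have : (j : ℝ) < 2 * N + 1 := by nlinarith
    exact_mod_cast this
  refine ⟨⟨j, hjlt⟩, ?_⟩
  have hdiff : x - gridPt N j = ((x + 1) * N - j) / N := by
    rw [gridPt]; field_simp; ring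
  rw [hdiff, abs_div, abs_of_pos hN', div_le_div_iff_of_pos_right hN', abs_le]
  constructor <;> linarith

def gridVec (N : ℕ) (j : Fin 3 → Fin (2 * N + 1)) : EuclideanSpace ℂ (Fin 2) :=
  !₂[(gridPt N (j 0) : ℂ), ⟨gridPt N (j 1), gridPt N (j 2)⟩]

lemma norm_gridVec_le {N : ℕ} (j : Fin 3 → Fin (2 * N + 1)) : ‖gridVec N j‖ ≤ 3 := by
  refine (EuclideanSpace.norm_toLp_fin_two_le _ _).trans ?_
  have := (Complex.norm_le_abs_re_add_abs_im ⟨gridPt N (j 1), gridPt N (j 2)⟩)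
  simp only [Complex.norm_real, Real.norm_eq_abs] at this ⊢
  linarith [abs_gridPt_le (j 0), abs_gridPt_le (j 1), abs_gridPt_le (j 2)]

lemma exists_norm_sub_gridVec_le {N : ℕ} (hN : 0 < N) {x : ℝ} {z : ℂ} (hx : |x| ≤ 1)
    (hz : ‖z‖ ≤ 1) : ∃ j, ‖!₂[(x : ℂ), z] - gridVec N j‖ ≤ 3 / N := by
  obtain ⟨j₀, h₀⟩ := exists_abs_sub_gridPt_le hN hx
  obtain ⟨j₁, h₁⟩ := exists_abs_sub_gridPt_le hN ((Complex.abs_re_le_norm z).trans hz)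
  obtain ⟨j₂, h₂⟩ := exists_abs_sub_gridPt_le hN ((Complex.abs_im_le_norm z).trans hz)
  refine ⟨![j₀, j₁, j₂], ?_⟩
  have hsub : !₂[(x : ℂ), z] - gridVec N ![j₀, j₁, j₂] =
      !₂[((x - gridPt N j₀ : ℝ) : ℂ), z - ⟨gridPt N j₁, gridPt N j₂⟩] := by
    ext i; fin_cases i <;> simp [gridVec]
  rw [hsub]
  refine (EuclideanSpace.norm_toLp_fin_two_le _ _).trans ?_
  have := Complex.norm_le_abs_re_add_abs_im (z - ⟨gridPt N j₁, gridPt N j₂⟩)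
  simp only [Complex.norm_real, Real.norm_eq_abs, Complex.sub_re, Complex.sub_im] at this ⊢
  linarith [show (3 : ℝ) / N = 1 / N + 1 / N + 1 / N by ring]

lemma exists_norm_sub_vecMulVec_gridVec_le {N : ℕ} (hN : 0 < N) {M : Matrix (Fin 2) (Fin 2) ℂ}
    (hM : M.PosSemidef) (hrank : M.rank = 1) (hdiag : ∀ j, (M j j).re ≤ 1) :
    ∃ j, ‖M - vecMulVec (⇑(gridVec N j)) (star ⇑(gridVec N j))‖ ≤ 15 / N := by
  obtain ⟨x, z, rfl⟩ := hM.exists_eq_vecMulVec_of_det_eq_zero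
    (det_eq_zero_of_rank_lt (by simp [hrank]))
  have hx : |x| ≤ 1 := by
    have h00 := hdiag 0
    simp only [vecMulVec_apply, cons_val_zero, Pi.star_apply, RCLike.star_def,
      Complex.conj_ofReal, ← Complex.ofReal_mul, Complex.ofReal_re] at h00
    exact abs_le_one_iff_mul_self_le_one.2 h00
  have hz : ‖z‖ ≤ 1 := by
    have h11 := hdiag 1
    simp only [vecMulVec_apply, Matrix.cons_val_one, Matrix.cons_val_zero, Pi.star_apply,
      Complex.star_def, Complex.mul_conj, Complex.normSq_eq_norm_sq] at h11
    norm_cast at h11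
    exact (sq_le_one_iff₀ (norm_nonneg z)).1 h11
  obtain ⟨j, hj⟩ := exists_norm_sub_gridVec_le hN hx hz
  refine ⟨j, (l2_opNorm_vecMulVec_star_sub_le !₂[(x : ℂ), z] (gridVec N j)).trans ?_⟩
  have hv : ‖!₂[(x : ℂ), z]‖ ≤ 2 := by
    have := EuclideanSpace.norm_toLp_fin_two_le (x : ℂ) z
    simp only [Complex.norm_real, Real.norm_eq_abs] at this
    linarith
  calc _ ≤ (2 + 3) * (3 / N : ℝ) := by gcongr; exact norm_gridVec_le j
    _ = 15 / N := by ring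

def gridTuple (N : ℕ) {q : ℕ} (J : Fin q → Fin 3 → Fin (2 * N + 1)) :
    Fin q → Matrix (Fin 2) (Fin 2) ℂ :=
  fun i ↦ vecMulVec (⇑(gridVec N (J i))) (star ⇑(gridVec N (J i)))

lemma exists_dist_gridTuple_le {N q : ℕ} (hN : 0 < N) {M : Fin q → Matrix (Fin 2) (Fin 2) ℂ}
    (hM : M ∈ Sq q) : ∃ J, dist M (gridTuple N J) ≤ 15 / N := by
  obtain ⟨hrank, hsum⟩ := hM
  choose J hJ using fun i ↦ exists_norm_sub_vecMulVec_gridVec_le hN (hrank i).1 (hrank i).2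
    (PosSemidef.re_apply_le_one_of_sum_eq_one (fun i ↦ (hrank i).1) hsum i)
  exact ⟨J, (dist_pi_le_iff (by positivity)).2 fun i ↦ (dist_eq_norm _ _).trans_le (hJ i)⟩

/-- ε-nets of cardinality (C/ε)^{3q} for the set 𝒮_q of q-outcome
rank-one single-qubit POVMs, with respect to the metric `tDist`. -/
theorem epsnet_q_outcome :
    ∃ C : ℝ, 0 < C ∧ ∀ q : ℕ, 2 ≤ q → ∀ ε : ℝ, 0 < ε → ε ≤ 1 →
      ∃ L : Finset (Fin q → Matrix (Fin 2) (Fin 2) ℂ),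
        ↑L ⊆ Sq q ∧ (L.card : ℝ) ≤ (C / ε)^(3*q) ∧ IsNet L ε := by
  refine ⟨63, by norm_num, fun q _ ε hε hε₁ ↦ ?_⟩
  set N := ⌈30 / ε⌉₊
  have hN : 30 / ε ≤ N := Nat.le_ceil _
  have hN₀ : 0 < N := Nat.ceil_pos.2 (by positivity)
  obtain ⟨L, hLS, hLcard, hLnet⟩ := exists_finset_subset_forall_dist_le_two_mul
    (gridTuple N) ⟨15 / N, by positivity⟩ fun M hM ↦ exists_dist_gridTuple_le hN₀ hM
  refine ⟨L, hLS, ?_, fun M hM ↦ ?_⟩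
  · have hgrid : (2 * N + 1 : ℝ) ≤ 63 / ε := by
      have := Nat.ceil_lt_add_one (div_pos (by norm_num : (0:ℝ) < 30) hε).le
      rw [le_div_iff₀ hε]
      nlinarith [(div_mul_cancel₀ (30 : ℝ) hε.ne')]
    calc (L.card : ℝ) ≤ (2 * N + 1 : ℝ) ^ (3 * q) := by
          have : L.card ≤ (2 * N + 1) ^ (3 * q) := by simpa [pow_mul', mul_comm] using hLcard
          exact_mod_cast this
      _ ≤ (63 / ε) ^ (3 * q) := by gcongr
  · obtain ⟨M', hM', hdist⟩ := hLnet M hM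
    refine ⟨M', hM', ?_⟩
    rw [tDist_eq_dist]
    calc dist M M' ≤ 2 * (15 / N) := hdist
      _ = 30 / N := by ring
      _ ≤ ε := div_le_of_le_mul₀ (Nat.cast_nonneg N) hε.le
        (by rwa [div_le_iff₀ hε, mul_comm] at hN)

end IQ
end
end

section
/- Let 𝓜 be a 1-pass LOCC strategy with q-outcome measurements in which every POVM element has rank 1, with output Z in the state discrimination game (for an arbitrary fixed encoding function E). Fix 0 < ε ≤ 1/(q·n·e) and let L be an ε-net for 𝒮_q with respect to the metric t. Let 𝓜' be the strategy obtained from 𝓜 by keeping the same qubit choices and replacing each measurement M ∈ 𝒮_q by a measurement M̃ ∈ L with t(M,M̃) ≤ ε, and let Z' be its output. Then |I(Z';U) − I(Z;U)| ≤ 2qn²ε + 2η(qnε), where η(x) := −x·lg x. -/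
/-!
Replacing every measurement by one that is `ε`-close in operator norm moves each conditional
outcome distribution of a step by at most `qε` in total variation, hence the outcome distribution
of the whole adaptive tree, a product of these, by at most `nqε =: δ`.
Since `U` stays uniform, `I(Z;U)` changes only through `H(U|Z)`, which is controlled by the
Alicki–Fannes–Winter argument: write `P + D = Q + D'` with `D, D'` the negative and positive
parts of `P - Q`, both of mass at most `δ/2`; the unnormalized conditional entropy `G` is
superadditive and satisfies `G(Q + D') ≤ G(Q) + G(D') + κ(1, δ/2)` with `κ` the entropy of
mixing, so `G(P) - G(Q) ≤ (δ/2) log |U| + κ(1, δ/2)`, and `κ(1, δ/2) ≤ 2η(δ)` once `δ ≤ 1/e`.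
-/

open scoped BigOperators ComplexOrder

noncomputable section

namespace IQ

open Finset Real

lemma negMulLog_le_tangent {t m : ℝ} (ht : 0 ≤ t) (hm : 0 < m) :
    negMulLog t ≤ m - t - t * log m := by
  rcases ht.eq_or_lt with rfl | ht
  · simpa using hm.le
  · have h := log_le_sub_one_of_pos (div_pos hm ht)
    rw [log_div hm.ne' ht.ne'] at h
    have hm' : t * (m / t) = m := by field_simp
    simp only [negMulLog]
    nlinarith [mul_le_mul_of_nonneg_left h ht.le]

lemma log_le_neg_one {x : ℝ} (hx : 0 < x) (hxe : x ≤ (exp 1)⁻¹) : log x ≤ -1 :=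
  (log_le_iff_le_exp hx).2 (by rwa [exp_neg])

lemma negMulLog_le_negMulLog {a b : ℝ} (ha : 0 ≤ a) (hab : a ≤ b) (hb : b ≤ (exp 1)⁻¹) :
    negMulLog a ≤ negMulLog b := by
  rcases (ha.trans hab).eq_or_lt with hb0 | hb0
  · rw [le_antisymm (hb0 ▸ hab) ha, ← hb0]
  · have h := negMulLog_le_tangent ha hb0
    have hlog := log_le_neg_one hb0 hb
    simp only [negMulLog] at h ⊢
    nlinarith

lemma le_negMulLog {x : ℝ} (hx : 0 ≤ x) (hxe : x ≤ (exp 1)⁻¹) : x ≤ negMulLog x := by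
  rcases hx.eq_or_lt with rfl | hx
  · simp
  · have hlog := log_le_neg_one hx hxe
    simp only [negMulLog]
    nlinarith

lemma mul_log_sub_log_nonneg {x y : ℝ} (hx : 0 ≤ x) (hxy : x ≤ y) :
    0 ≤ x * (log y - log x) := by
  rcases hx.eq_or_lt with rfl | hx
  · simp
  · exact mul_nonneg hx.le (sub_nonneg.2 (log_le_log hx hxy))

/-- The entropy of mixing the masses `x` and `y`: `(x + y) · h(x / (x + y))` in nats. -/
def mixingEntropy (x y : ℝ) : ℝ := negMulLog x + negMulLog y - negMulLog (x + y)

lemma mixingEntropy_eq (x y : ℝ) :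
    mixingEntropy x y = x * (log (x + y) - log x) + y * (log (x + y) - log y) := by
  simp only [mixingEntropy, negMulLog]
  ring

@[simp] lemma mixingEntropy_zero_left (y : ℝ) : mixingEntropy 0 y = 0 := by
  simp [mixingEntropy]

@[simp] lemma mixingEntropy_zero_right (x : ℝ) : mixingEntropy x 0 = 0 := by
  simp [mixingEntropy]

lemma mixingEntropy_nonneg {x y : ℝ} (hx : 0 ≤ x) (hy : 0 ≤ y) : 0 ≤ mixingEntropy x y := by
  rw [mixingEntropy_eq]
  exact add_nonneg (mul_log_sub_log_nonneg hx (by linarith))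
    (mul_log_sub_log_nonneg hy (by linarith))

lemma mixingEntropy_le {a c A C : ℝ} (ha : 0 ≤ a) (hc : 0 ≤ c) (hA : 0 < A) (hC : 0 < C) :
    mixingEntropy a c ≤ a * (log (A + C) - log A) + c * (log (A + C) - log C) := by
  rcases (add_nonneg ha hc).eq_or_lt with hs | hs
  · obtain ⟨rfl, rfl⟩ := (add_eq_zero_iff_of_nonneg ha hc).1 hs.symm
    simp
  -- tangents of `negMulLog` at the two parts of `a + c` split in the ratio `A : C`
  have h₁ := negMulLog_le_tangent ha (m := (a + c) * A / (A + C)) (by positivity)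
  have h₂ := negMulLog_le_tangent hc (m := (a + c) * C / (A + C)) (by positivity)
  rw [log_div (by positivity) (by positivity), log_mul hs.ne' hA.ne'] at h₁
  rw [log_div (by positivity) (by positivity), log_mul hs.ne' hC.ne'] at h₂
  have hsplit : (a + c) * A / (A + C) + (a + c) * C / (A + C) = a + c := by field_simp
  simp only [mixingEntropy, negMulLog] at h₁ h₂ ⊢
  nlinarith

lemma sum_mixingEntropy_le {ι : Type*} [Fintype ι] {a c : ι → ℝ} (ha : 0 ≤ a) (hc : 0 ≤ c) :
    ∑ i, mixingEntropy (a i) (c i) ≤ mixingEntropy (∑ i, a i) (∑ i, c i) := by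
  rcases (Fintype.sum_nonneg ha).eq_or_lt with hA | hA
  · simp [(Fintype.sum_eq_zero_iff_of_nonneg ha).1 hA.symm]
  rcases (Fintype.sum_nonneg hc).eq_or_lt with hC | hC
  · simp [(Fintype.sum_eq_zero_iff_of_nonneg hc).1 hC.symm]
  calc ∑ i, mixingEntropy (a i) (c i)
      ≤ ∑ i, (a i * (log ((∑ j, a j) + ∑ j, c j) - log (∑ j, a j))
          + c i * (log ((∑ j, a j) + ∑ j, c j) - log (∑ j, c j))) :=
        sum_le_sum fun i _ => mixingEntropy_le (ha i) (hc i) hA hC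
    _ = mixingEntropy (∑ i, a i) (∑ i, c i) := by
        rw [mixingEntropy_eq, sum_add_distrib, ← sum_mul, ← sum_mul]

section ConditionalEntropy

variable {σ τ : Type*} [Fintype σ] [Fintype τ]

/-- `(∑ a) · H(a / ∑ a)` in nats, for a weight vector `a ≥ 0`. -/
def scaledEntropy (a : τ → ℝ) : ℝ := ∑ u, negMulLog (a u) - negMulLog (∑ u, a u)

lemma scaledEntropy_eq (a : τ → ℝ) :
    scaledEntropy a = ∑ u, a u * (log (∑ v, a v) - log (a u)) := by
  simp only [scaledEntropy, negMulLog, neg_mul, mul_sub, sum_sub_distrib, sum_neg_distrib,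
    ← sum_mul]
  ring

lemma scaledEntropy_nonneg {a : τ → ℝ} (ha : 0 ≤ a) : 0 ≤ scaledEntropy a := by
  rw [scaledEntropy_eq]
  exact Fintype.sum_nonneg fun u =>
    mul_log_sub_log_nonneg (ha u) (single_le_sum (fun v _ => ha v) (mem_univ u))

lemma scaledEntropy_le {a : τ → ℝ} (ha : 0 ≤ a) :
    scaledEntropy a ≤ (∑ u, a u) * log (Fintype.card τ) := by
  rcases (Fintype.sum_nonneg ha).eq_or_lt with hA | hA
  · simp [scaledEntropy, (Fintype.sum_eq_zero_iff_of_nonneg ha).1 hA.symm]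
  have hd : (0 : ℝ) < Fintype.card τ := by
    rcases isEmpty_or_nonempty τ with _ | _
    · simp at hA
    · exact_mod_cast Fintype.card_pos
  -- the tangent of `negMulLog` at the uniform weight
  have htangent : ∑ u, negMulLog (a u) ≤
      ∑ u, ((∑ v, a v) / Fintype.card τ - a u - a u * log ((∑ v, a v) / Fintype.card τ)) :=
    sum_le_sum fun u _ => negMulLog_le_tangent (ha u) (by positivity)
  rw [sum_sub_distrib, sum_sub_distrib, sum_const, card_univ, nsmul_eq_mul, ← sum_mul,
    log_div hA.ne' hd.ne', mul_div_cancel₀ _ hd.ne'] at htangent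
  rw [scaledEntropy, negMulLog]
  linarith

lemma scaledEntropy_add_le {a c : τ → ℝ} (ha : 0 ≤ a) (hc : 0 ≤ c) :
    scaledEntropy a + scaledEntropy c ≤ scaledEntropy (a + c) := by
  have h := sum_mixingEntropy_le ha hc
  simp only [scaledEntropy, mixingEntropy, Pi.add_apply, sum_add_distrib, sum_sub_distrib] at h ⊢
  linarith

lemma scaledEntropy_add_le_add_mixingEntropy {a c : τ → ℝ} (ha : 0 ≤ a) (hc : 0 ≤ c) :
    scaledEntropy (a + c) ≤
      scaledEntropy a + scaledEntropy c + mixingEntropy (∑ u, a u) (∑ u, c u) := by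
  have h : 0 ≤ ∑ u, mixingEntropy (a u) (c u) :=
    Fintype.sum_nonneg fun u => mixingEntropy_nonneg (ha u) (hc u)
  simp only [scaledEntropy, mixingEntropy, Pi.add_apply, sum_add_distrib, sum_sub_distrib] at h ⊢
  linarith

/-- `H(U|Z)` in nats, scaled by the total mass of `R`. -/
def condEntNats (R : σ → τ → ℝ) : ℝ := ∑ z, scaledEntropy (R z)

lemma shannon_eq_sum_negMulLog_div {ι : Type*} [Fintype ι] (p : ι → ℝ) :
    shannon p = (∑ i, negMulLog (p i)) / log 2 := by
  simp only [shannon, logb, negMulLog, sum_div]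
  exact sum_congr rfl fun i _ => by ring

lemma condEnt_eq_condEntNats_div (P : σ → τ → ℝ) : condEnt P = condEntNats P / log 2 := by
  rw [condEnt, shannon_eq_sum_negMulLog_div, shannon_eq_sum_negMulLog_div, Fintype.sum_prod_type,
    ← sub_div, ← sum_sub_distrib]
  rfl

lemma condEntNats_nonneg {R : σ → τ → ℝ} (hR : 0 ≤ R) : 0 ≤ condEntNats R :=
  Fintype.sum_nonneg fun z => scaledEntropy_nonneg (hR z)

lemma condEntNats_le {R : σ → τ → ℝ} (hR : 0 ≤ R) :
    condEntNats R ≤ (∑ z, ∑ u, R z u) * log (Fintype.card τ) := by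
  rw [sum_mul]
  exact sum_le_sum fun z _ => scaledEntropy_le (hR z)

lemma condEntNats_add_le {R S : σ → τ → ℝ} (hR : 0 ≤ R) (hS : 0 ≤ S) :
    condEntNats R + condEntNats S ≤ condEntNats (R + S) := by
  rw [condEntNats, condEntNats, ← sum_add_distrib]
  exact sum_le_sum fun z _ => scaledEntropy_add_le (hR z) (hS z)

lemma condEntNats_add_le_add_mixingEntropy {R S : σ → τ → ℝ} (hR : 0 ≤ R) (hS : 0 ≤ S) :
    condEntNats (R + S) ≤ condEntNats R + condEntNats S
      + mixingEntropy (∑ z, ∑ u, R z u) (∑ z, ∑ u, S z u) := by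
  calc condEntNats (R + S)
      ≤ ∑ z, (scaledEntropy (R z) + scaledEntropy (S z)
          + mixingEntropy (∑ u, R z u) (∑ u, S z u)) :=
        sum_le_sum fun z _ => scaledEntropy_add_le_add_mixingEntropy (hR z) (hS z)
    _ ≤ condEntNats R + condEntNats S + mixingEntropy (∑ z, ∑ u, R z u) (∑ z, ∑ u, S z u) := by
        rw [sum_add_distrib, sum_add_distrib]
        exact add_le_add le_rfl (sum_mixingEntropy_le (fun z => Fintype.sum_nonneg (hR z))
          (fun z => Fintype.sum_nonneg (hS z)))

lemma condEntNats_sub_le_of_add_eq {P Q D D' : σ → τ → ℝ} (hP : 0 ≤ P) (hQ : 0 ≤ Q)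
    (hD : 0 ≤ D) (hD' : 0 ≤ D') (h : P + D = Q + D') :
    condEntNats P - condEntNats Q ≤ (∑ z, ∑ u, D' z u) * log (Fintype.card τ)
      + mixingEntropy (∑ z, ∑ u, Q z u) (∑ z, ∑ u, D' z u) := by
  have hPD := condEntNats_add_le hP hD
  have hQD' := condEntNats_add_le_add_mixingEntropy hQ hD'
  have hD'le := condEntNats_le hD'
  have hD0 := condEntNats_nonneg hD
  rw [h] at hPD
  linarith

lemma condEntNats_sub_le {P Q : σ → τ → ℝ} (hP : 0 ≤ P) (hQ : 0 ≤ Q)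
    (hP1 : ∑ z, ∑ u, P z u = 1) (hQ1 : ∑ z, ∑ u, Q z u = 1) :
    condEntNats P - condEntNats Q ≤
      (∑ z, ∑ u, |P z u - Q z u|) / 2 * log (Fintype.card τ)
        + mixingEntropy 1 ((∑ z, ∑ u, |P z u - Q z u|) / 2) := by
  have hdecomp : P + (fun z u => (P z u - Q z u)⁻) = Q + (fun z u => (P z u - Q z u)⁺) := by
    funext z u
    simp only [Pi.add_apply]
    linarith [posPart_sub_negPart (P z u - Q z u)]
  have hmass : ∑ z, ∑ u, (P z u - Q z u)⁺ = (∑ z, ∑ u, |P z u - Q z u|) / 2 := by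
    have hdiff : ∑ z, ∑ u, ((P z u - Q z u)⁺ - (P z u - Q z u)⁻) = 0 := by
      simp only [posPart_sub_negPart, sum_sub_distrib, hP1, hQ1, sub_self]
    have hsum : ∑ z, ∑ u, ((P z u - Q z u)⁺ + (P z u - Q z u)⁻) = ∑ z, ∑ u, |P z u - Q z u| := by
      simp only [posPart_add_negPart]
    simp only [sum_sub_distrib, sum_add_distrib] at hdiff hsum
    linarith
  have h := condEntNats_sub_le_of_add_eq hP hQ (fun z u => negPart_nonneg _)
    (fun z u => posPart_nonneg _) hdecomp
  rwa [hQ1, hmass] at h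

lemma mixingEntropy_one_le {t δ : ℝ} (ht : 0 ≤ t) (htδ : 2 * t ≤ δ) (hδ : δ ≤ (exp 1)⁻¹) :
    mixingEntropy 1 t ≤ 2 * negMulLog δ := by
  have hδ1 : δ ≤ 1 := hδ.trans (inv_le_one_of_one_le₀ (one_le_exp zero_le_one))
  have hlog : log (1 + t) ≤ t := by linarith [log_le_sub_one_of_pos (by linarith : 0 < 1 + t)]
  have hmono := negMulLog_le_negMulLog ht (by linarith) hδ
  have hself := le_negMulLog (by linarith) hδ
  have hexpand : mixingEntropy 1 t = negMulLog t + (1 + t) * log (1 + t) := by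
    simp only [mixingEntropy, negMulLog, log_one]
    ring
  rw [hexpand]
  nlinarith

lemma eta_eq_negMulLog_div (x : ℝ) : eta x = negMulLog x / log 2 := by
  simp only [eta, logb, negMulLog]
  ring

lemma abs_condEnt_sub_le {P Q : σ → τ → ℝ} (hP : 0 ≤ P) (hQ : 0 ≤ Q)
    (hP1 : ∑ z, ∑ u, P z u = 1) (hQ1 : ∑ z, ∑ u, Q z u = 1) {δ : ℝ}
    (hPQ : ∑ z, ∑ u, |P z u - Q z u| ≤ δ) (hδ : δ ≤ (exp 1)⁻¹) :
    |condEnt P - condEnt Q| ≤ δ / 2 * logb 2 (Fintype.card τ) + 2 * eta δ := by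
  have hlog2 : 0 < log 2 := log_pos one_lt_two
  have hTV0 : 0 ≤ ∑ z, ∑ u, |P z u - Q z u| :=
    Fintype.sum_nonneg fun z => Fintype.sum_nonneg fun u => abs_nonneg _
  have hQP : ∑ z, ∑ u, |Q z u - P z u| = ∑ z, ∑ u, |P z u - Q z u| := by
    simp only [abs_sub_comm]
  have hcard : 0 ≤ log (Fintype.card τ) := log_natCast_nonneg _
  have hmix := mixingEntropy_one_le (t := (∑ z, ∑ u, |P z u - Q z u|) / 2) (by positivity)
    (by linarith) hδ
  have hPQ' := condEntNats_sub_le hP hQ hP1 hQ1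
  have hQP' := condEntNats_sub_le hQ hP hQ1 hP1
  rw [hQP] at hQP'
  have hbits : (δ / 2 * logb 2 (Fintype.card τ) + 2 * eta δ) * log 2
      = δ / 2 * log (Fintype.card τ) + 2 * negMulLog δ := by
    rw [eta_eq_negMulLog_div, logb]
    field_simp
  rw [condEnt_eq_condEntNats_div, condEnt_eq_condEntNats_div, ← sub_div, abs_div,
    abs_of_pos hlog2, div_le_iff₀ hlog2, hbits]
  refine abs_sub_le_iff.2 ⟨?_, ?_⟩ <;> nlinarith

end ConditionalEntropy

section TreeProb

variable {q : ℕ}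

/-- The probability of the leaf `z` of a depth-`n` tree whose step `a` draws `z a` from the
distribution `f a (pre z a)`, which depends on the earlier draws. -/
def treeProb {n : ℕ} (f : (a : Fin n) → (Fin a → Fin q) → Fin q → ℝ) (z : Fin n → Fin q) : ℝ :=
  ∏ a, f a (pre z a) (z a)

def treeHead {n : ℕ} (f : (a : Fin (n + 1)) → (Fin a → Fin q) → Fin q → ℝ) : Fin q → ℝ :=
  f 0 fun i => i.elim0

def treeTail {n : ℕ} (f : (a : Fin (n + 1)) → (Fin a → Fin q) → Fin q → ℝ) (ζ : Fin q) :
    (a : Fin n) → (Fin a → Fin q) → Fin q → ℝ :=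
  fun a w => f a.succ (Fin.cons ζ w)

lemma pre_cons_succ {n : ℕ} (ζ : Fin q) (w : Fin n → Fin q) (a : Fin n) :
    pre (Fin.cons ζ w : Fin (n + 1) → Fin q) a.succ = Fin.cons ζ (pre w a) := by
  funext j
  refine Fin.cases rfl (fun k => ?_) j
  simp only [pre, Fin.cons_succ]
  rfl

lemma treeProb_cons {n : ℕ} (f : (a : Fin (n + 1)) → (Fin a → Fin q) → Fin q → ℝ)
    (ζ : Fin q) (w : Fin n → Fin q) :
    treeProb f (Fin.cons ζ w) = treeHead f ζ * treeProb (treeTail f ζ) w := by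
  unfold treeProb
  rw [Fin.prod_univ_succ, Fin.cons_zero]
  congr 1
  · exact congrArg (f 0 · ζ) (funext fun i => i.elim0)
  · exact Fintype.prod_congr _ _ fun a => by simp only [treeTail, pre_cons_succ, Fin.cons_succ]

lemma sum_fin_succ_pi {n : ℕ} {α β : Type*} [Fintype α] [AddCommMonoid β]
    (g : (Fin (n + 1) → α) → β) :
    ∑ z, g z = ∑ ζ : α, ∑ w : Fin n → α, g (Fin.cons ζ w) := by
  rw [← (Fin.consEquiv fun _ => α).sum_comp, Fintype.sum_prod_type]
  rfl

lemma treeProb_nonneg {n : ℕ} {f : (a : Fin n) → (Fin a → Fin q) → Fin q → ℝ}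
    (hf : ∀ a w, 0 ≤ f a w) (z : Fin n → Fin q) : 0 ≤ treeProb f z :=
  prod_nonneg fun a _ => hf a _ _

lemma sum_treeProb : ∀ {n : ℕ} {f : (a : Fin n) → (Fin a → Fin q) → Fin q → ℝ},
    (∀ a w, ∑ ζ, f a w ζ = 1) → ∑ z, treeProb f z = 1
  | 0, f, _ => by simp [treeProb]
  | n + 1, f, hf => by
    simp only [sum_fin_succ_pi, treeProb_cons, ← mul_sum]
    simp only [sum_treeProb (f := treeTail f _) fun a w => hf a.succ _, mul_one]
    exact hf 0 _

lemma sum_abs_treeProb_sub_le {θ : ℝ} :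
    ∀ {n : ℕ} {f f' : (a : Fin n) → (Fin a → Fin q) → Fin q → ℝ},
    (∀ a w, 0 ≤ f a w) → (∀ a w, 0 ≤ f' a w) →
    (∀ a w, ∑ ζ, f a w ζ = 1) → (∀ a w, ∑ ζ, f' a w ζ = 1) →
    (∀ a w, ∑ ζ, |f a w ζ - f' a w ζ| ≤ θ) →
    ∑ z, |treeProb f z - treeProb f' z| ≤ n * θ
  | 0, f, f', _, _, _, _, _ => by simp [treeProb]
  | n + 1, f, f', h0, h0', hs, hs', hθ => by
    have hsplit : ∀ ζ w, |treeProb f (Fin.cons ζ w) - treeProb f' (Fin.cons ζ w)| ≤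
        |treeHead f ζ - treeHead f' ζ| * treeProb (treeTail f' ζ) w
          + treeHead f ζ * |treeProb (treeTail f ζ) w - treeProb (treeTail f' ζ) w| := by
      intro ζ w
      have hA' := treeProb_nonneg (f := treeTail f' ζ) (fun a w => h0' _ _) w
      have hx : 0 ≤ treeHead f ζ := h0 0 _ ζ
      rw [treeProb_cons, treeProb_cons]
      calc _ = |(treeHead f ζ - treeHead f' ζ) * treeProb (treeTail f' ζ) w
              + treeHead f ζ * (treeProb (treeTail f ζ) w - treeProb (treeTail f' ζ) w)| := by
            ring_nf
        _ ≤ _ := by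
            refine (abs_add_le _ _).trans_eq ?_
            rw [abs_mul, abs_mul, abs_of_nonneg hA', abs_of_nonneg hx]
    have ih : ∀ ζ, ∑ w, |treeProb (treeTail f ζ) w - treeProb (treeTail f' ζ) w| ≤ n * θ :=
      fun ζ => sum_abs_treeProb_sub_le (fun a w => h0 _ _) (fun a w => h0' _ _)
        (fun a w => hs _ _) (fun a w => hs' _ _) (fun a w => hθ _ _)
    calc ∑ z, |treeProb f z - treeProb f' z|
        ≤ ∑ ζ, (|treeHead f ζ - treeHead f' ζ| * ∑ w, treeProb (treeTail f' ζ) w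
            + treeHead f ζ * ∑ w, |treeProb (treeTail f ζ) w - treeProb (treeTail f' ζ) w|) := by
          rw [sum_fin_succ_pi]
          refine sum_le_sum fun ζ _ => ?_
          rw [mul_sum, mul_sum, ← sum_add_distrib]
          exact sum_le_sum fun w _ => hsplit ζ w
      _ ≤ ∑ ζ, (|treeHead f ζ - treeHead f' ζ| + treeHead f ζ * (n * θ)) := by
          refine sum_le_sum fun ζ _ => ?_
          rw [sum_treeProb (f := treeTail f' ζ) fun a w => hs' _ _, mul_one]
          exact add_le_add le_rfl (mul_le_mul_of_nonneg_left (ih ζ) (h0 0 _ ζ))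
      _ ≤ (n + 1 : ℕ) * θ := by
          have hs₀ : ∑ ζ, treeHead f ζ = 1 := hs 0 _
          have hθ₀ : ∑ ζ, |treeHead f ζ - treeHead f' ζ| ≤ θ := hθ 0 _
          rw [sum_add_distrib, ← sum_mul, hs₀, one_mul]
          push_cast
          linarith

end TreeProb

lemma expVal_sub (A B : Matrix (Fin 2) (Fin 2) ℂ) (ψ : Fin 2 → ℂ) :
    expVal (A - B) ψ = expVal A ψ - expVal B ψ := by
  rw [expVal, Matrix.sub_mulVec, dotProduct_sub, Complex.sub_re]
  rfl

lemma expVal_sum {ι : Type*} (s : Finset ι) (A : ι → Matrix (Fin 2) (Fin 2) ℂ) (ψ : Fin 2 → ℂ) :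
    expVal (∑ i ∈ s, A i) ψ = ∑ i ∈ s, expVal (A i) ψ := by
  simp [expVal, Matrix.sum_mulVec, dotProduct_sum, Complex.re_sum]

lemma expVal_one {ψ : Fin 2 → ℂ} (hψ : star ψ ⬝ᵥ ψ = 1) : expVal 1 ψ = 1 := by
  simp [expVal, hψ]

lemma expVal_nonneg {A : Matrix (Fin 2) (Fin 2) ℂ} (hA : A.PosSemidef) (ψ : Fin 2 → ℂ) :
    0 ≤ expVal A ψ :=
  (Complex.le_def.1 (hA.dotProduct_mulVec_nonneg ψ)).1

lemma abs_expVal_le {ψ : Fin 2 → ℂ} (hψ : star ψ ⬝ᵥ ψ = 1) (A : Matrix (Fin 2) (Fin 2) ℂ) :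
    |expVal A ψ| ≤ opNormM A := by
  set x : EuclideanSpace ℂ (Fin 2) := WithLp.toLp 2 ψ
  have hx : ‖x‖ = 1 := by
    have hinner : inner ℂ x x = (1 : ℂ) := by
      rw [EuclideanSpace.inner_toLp_toLp, dotProduct_comm, hψ]
    rw [← pow_eq_one_iff_of_nonneg (norm_nonneg x) two_ne_zero,
      ← inner_self_eq_norm_sq (𝕜 := ℂ), hinner, RCLike.one_re]
  have hexp : expVal A ψ = (inner ℂ x (Matrix.toEuclideanCLM (𝕜 := ℂ) A x)).re := by
    rw [Matrix.toEuclideanCLM_toLp, EuclideanSpace.inner_toLp_toLp, dotProduct_comm]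
    rfl
  calc |expVal A ψ| ≤ ‖inner ℂ x (Matrix.toEuclideanCLM (𝕜 := ℂ) A x)‖ :=
        hexp ▸ Complex.abs_re_le_norm _
    _ ≤ ‖x‖ * (opNormM A * ‖x‖) :=
        (norm_inner_le_norm _ _).trans (by gcongr; exact ContinuousLinearMap.le_opNorm _ _)
    _ = opNormM A := by rw [hx, one_mul, mul_one]

lemma star_alpha_dotProduct (b c : Fin 2) : star (alpha b c) ⬝ᵥ alpha b c = 1 := by
  have h2 : ((Real.sqrt 2 : ℝ) : ℂ) * ((Real.sqrt 2 : ℝ) : ℂ) = 2 := by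
    rw [← Complex.ofReal_mul, Real.mul_self_sqrt zero_le_two, Complex.ofReal_ofNat]
  fin_cases b <;> fin_cases c <;>
    simp [alpha, ket00, ket11, ketP, ketM, dotProduct, Fin.sum_univ_two,
      map_inv₀, Complex.conj_ofReal] <;>
    field_simp <;> rw [sq, h2] <;> ring

lemma opNormM_le_tDist {q : ℕ} (A B : Fin q → Matrix (Fin 2) (Fin 2) ℂ) (i : Fin q) :
    opNormM (A i - B i) ≤ tDist A B :=
  le_ciSup (f := fun i => opNormM (A i - B i)) (Set.finite_range _).bddAbove i

section Strategy

variable {n q : ℕ}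

def stepProb (M : Strategy n q) (ψ : Fin n → Fin 2 → ℂ) (a : Fin n) (w : Fin a → Fin q)
    (ζ : Fin q) : ℝ :=
  expVal (M.povm a w ζ) (ψ (M.qubit a w))

lemma stepProb_nonneg (M : Strategy n q) (ψ : Fin n → Fin 2 → ℂ) (a : Fin n)
    (w : Fin a → Fin q) : 0 ≤ stepProb M ψ a w :=
  fun ζ => expVal_nonneg (M.povm_psd a w ζ) _

lemma sum_stepProb (M : Strategy n q) {ψ : Fin n → Fin 2 → ℂ} (hψ : ∀ i, star (ψ i) ⬝ᵥ ψ i = 1)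
    (a : Fin n) (w : Fin a → Fin q) : ∑ ζ, stepProb M ψ a w ζ = 1 := by
  simp only [stepProb, ← expVal_sum, M.povm_sum, expVal_one (hψ _)]

lemma sum_abs_stepProb_sub_le {M M' : Strategy n q} {ψ : Fin n → Fin 2 → ℂ}
    (hψ : ∀ i, star (ψ i) ⬝ᵥ ψ i = 1) {a : Fin n} {w : Fin a → Fin q}
    (hQ : M'.qubit a w = M.qubit a w) :
    ∑ ζ, |stepProb M ψ a w ζ - stepProb M' ψ a w ζ| ≤ q * tDist (M.povm a w) (M'.povm a w) := by
  calc ∑ ζ, |stepProb M ψ a w ζ - stepProb M' ψ a w ζ|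
      ≤ ∑ _ζ : Fin q, tDist (M.povm a w) (M'.povm a w) := by
        refine sum_le_sum fun ζ _ => ?_
        rw [stepProb, stepProb, hQ, ← expVal_sub]
        exact (abs_expVal_le (hψ _) _).trans (opNormM_le_tDist _ _ ζ)
    _ = q * tDist (M.povm a w) (M'.povm a w) := by simp

lemma sum_outcomeProb (M : Strategy n q) {ψ : Fin n → Fin 2 → ℂ}
    (hψ : ∀ i, star (ψ i) ⬝ᵥ ψ i = 1) : ∑ z, outcomeProb M ψ z = 1 :=
  sum_treeProb (f := stepProb M ψ) (sum_stepProb M hψ)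

lemma sum_abs_outcomeProb_sub_le {M M' : Strategy n q} {ψ : Fin n → Fin 2 → ℂ} {ε : ℝ}
    (hψ : ∀ i, star (ψ i) ⬝ᵥ ψ i = 1) (hQ : ∀ a w, M'.qubit a w = M.qubit a w)
    (hM : ∀ a w, tDist (M.povm a w) (M'.povm a w) ≤ ε) :
    ∑ z, |outcomeProb M ψ z - outcomeProb M' ψ z| ≤ n * (q * ε) :=
  sum_abs_treeProb_sub_le (f := stepProb M ψ) (f' := stepProb M' ψ) (stepProb_nonneg M ψ)
    (stepProb_nonneg M' ψ) (sum_stepProb M hψ) (sum_stepProb M' hψ) fun a w =>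
      (sum_abs_stepProb_sub_le hψ (hQ a w)).trans (by gcongr; exact hM a w)

end Strategy

section Game

variable {n nt q : ℕ} (E : (Fin nt → Fin 2) → Fin n → Fin 2 × Fin 2)

lemma star_stateOf_dotProduct (u : Fin nt → Fin 2) (i : Fin n) :
    star (stateOf E u i) ⬝ᵥ stateOf E u i = 1 :=
  star_alpha_dotProduct _ _

lemma gameDist_nonneg (M : Strategy n q) : 0 ≤ gameDist M E :=
  fun z u => mul_nonneg (by positivity)
    (treeProb_nonneg (f := stepProb M (stateOf E u)) (stepProb_nonneg M _) z)

lemma sum_gameDist (M : Strategy n q) (u : Fin nt → Fin 2) :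
    ∑ z, gameDist M E z u = ((2 : ℝ) ^ nt)⁻¹ := by
  simp only [gameDist]
  rw [← mul_sum, sum_outcomeProb M (star_stateOf_dotProduct E u), mul_one]

lemma sum_sum_gameDist (M : Strategy n q) : ∑ z, ∑ u, gameDist M E z u = 1 := by
  rw [sum_comm]
  simp [sum_gameDist]

lemma sum_abs_gameDist_sub_le {M M' : Strategy n q} {ε : ℝ}
    (hQ : ∀ a w, M'.qubit a w = M.qubit a w)
    (hM : ∀ a w, tDist (M.povm a w) (M'.povm a w) ≤ ε) :
    ∑ z, ∑ u, |gameDist M E z u - gameDist M' E z u| ≤ q * n * ε := by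
  calc ∑ z, ∑ u, |gameDist M E z u - gameDist M' E z u|
      = ∑ u, ((2 : ℝ) ^ nt)⁻¹ *
          ∑ z, |outcomeProb M (stateOf E u) z - outcomeProb M' (stateOf E u) z| := by
        rw [sum_comm]
        simp only [gameDist, ← mul_sub, abs_mul, abs_inv, abs_pow, abs_two, mul_sum]
    _ ≤ ∑ _u : Fin nt → Fin 2, ((2 : ℝ) ^ nt)⁻¹ * (n * (q * ε)) := by
        gcongr with u
        exact sum_abs_outcomeProb_sub_le (star_stateOf_dotProduct E u) hQ hM
    _ = q * n * ε := by
        rw [sum_const, card_univ, Fintype.card_fun, Fintype.card_fin, Fintype.card_fin,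
          nsmul_eq_mul, Nat.cast_pow, Nat.cast_ofNat, mul_inv_cancel_left₀ (by positivity)]
        ring

end Game

lemma mutualInfo_eq_shannon_sub_condEnt {σ τ : Type*} [Fintype σ] [Fintype τ] (P : σ → τ → ℝ) :
    mutualInfo P = shannon (fun u => ∑ z, P z u) - condEnt P := by
  rw [mutualInfo, condEnt]
  ring

theorem discretization_general (n nt q : ℕ) (hnt : nt ≤ n)
    (E : (Fin nt → Fin 2) → Fin n → Fin 2 × Fin 2)
    (M M' : Strategy n q) (ε : ℝ)
    (hε : ε ≤ 1 / (q * n * Real.exp 1))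
    (hQ : ∀ a z, M'.qubit a z = M.qubit a z)
    (hM'close : ∀ a z, tDist (M.povm a z) (M'.povm a z) ≤ ε) :
    |mutualInfo (gameDist M' E) - mutualInfo (gameDist M E)| ≤
      2 * q * n^2 * ε + 2 * eta (q * n * ε) := by
  have hTV := sum_abs_gameDist_sub_le E hQ hM'close
  have hδ0 : 0 ≤ (q : ℝ) * n * ε :=
    (Fintype.sum_nonneg fun z => Fintype.sum_nonneg fun u => abs_nonneg _).trans hTV
  have hδ : (q : ℝ) * n * ε ≤ (exp 1)⁻¹ := by
    rcases (by positivity : (0 : ℝ) ≤ q * n).eq_or_lt with hqn | hqn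
    · rw [← hqn, zero_mul]
      positivity
    · calc (q : ℝ) * n * ε ≤ q * n * (1 / (q * n * exp 1)) := by gcongr
        _ = (exp 1)⁻¹ := by rw [mul_one_div, ← div_div, div_self hqn.ne', one_div]
  have hmarg : (fun u => ∑ z, gameDist M' E z u) = fun u => ∑ z, gameDist M E z u :=
    funext fun u => by rw [sum_gameDist, sum_gameDist]
  rw [mutualInfo_eq_shannon_sub_condEnt, mutualInfo_eq_shannon_sub_condEnt, hmarg,
    sub_sub_sub_cancel_left]
  refine (abs_condEnt_sub_le (gameDist_nonneg E M) (gameDist_nonneg E M') (sum_sum_gameDist E M)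
    (sum_sum_gameDist E M') hTV hδ).trans ?_
  have hnt' : (nt : ℝ) ≤ n := by exact_mod_cast hnt
  simp only [Fintype.card_fun, Fintype.card_fin, Nat.cast_pow, Nat.cast_ofNat, logb_pow,
    logb_self_eq_one one_lt_two, mul_one]
  nlinarith

/-- Discretizing a rank-one 1-pass LOCC strategy over an ε-net,
with ε ≤ 1/(qne), changes the mutual information by at most 2qn²ε + 2η(qnε). -/
theorem discretization (n nt q : ℕ) (hq : 2 ≤ q) (hnt : nt ≤ n)
    (E : (Fin nt → Fin 2) → Fin n → Fin 2 × Fin 2)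
    (M M' : Strategy n q) (ε : ℝ) (hε0 : 0 < ε)
    (hε : ε ≤ 1 / (q * n * Real.exp 1))
    (hrank : ∀ a z ζ, (M.povm a z ζ).rank = 1)
    (L : Finset (Fin q → Matrix (Fin 2) (Fin 2) ℂ))
    (hLsub : ↑L ⊆ Sq q) (hLnet : IsNet L ε)
    (hQ : ∀ a z, M'.qubit a z = M.qubit a z)
    (hM'mem : ∀ a z, M'.povm a z ∈ L)
    (hM'close : ∀ a z, tDist (M.povm a z) (M'.povm a z) ≤ ε) :
    |mutualInfo (gameDist M' E) - mutualInfo (gameDist M E)| ≤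
      2 * q * n^2 * ε + 2 * eta (q * n * ε) :=
  discretization_general n nt q hnt E M M' ε hε hQ hM'close

end IQ
end
end

section
/- Let N ≥ 1 and let G ∈ ℂ^{N×N} be positive semidefinite with eigenvalues λ₁,…,λ_N. Then (1/N)·∑_{u=1}^N ((√G)_{uu})² ≥ ((1/N)·Tr √G)² = ((1/N)·∑_u √λ_u)² ≥ 1 − (2/√N)·‖G − I‖_F, where √G is the positive semidefinite square root of G and ‖·‖_F is the Frobenius norm. -/
open scoped BigOperators ComplexOrder

noncomputable section

namespace IQ

/-- the positive semidefinite square root of a PSD matrix (the former `Matrix.PosSemidef.sqrt`) -/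
def psdSqrt {n : Type*} [Fintype n] [DecidableEq n] {A : Matrix n n ℂ} (hA : A.PosSemidef) :
    Matrix n n ℂ :=
  (hA.1.eigenvectorUnitary : Matrix n n ℂ) * Matrix.diagonal ((↑) ∘ (√·) ∘ hA.1.eigenvalues) *
    (star hA.1.eigenvectorUnitary : Matrix n n ℂ)

/-!
Diagonalise `G = U diag(λ) U*`. Then `√G` and `G - 1` are conjugates of the diagonal matrices
`diag(√λ)` and `diag(λ - 1)` by the same unitary, so `Tr √G = ∑ √λᵢ` and
`‖G - 1‖_F² = ∑ (λᵢ - 1)²`. The first inequality is Cauchy–Schwarz for the diagonal of `√G`.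
For the last one, `1 - √λ ≤ |λ - 1|` and Cauchy–Schwarz give `N - ∑ √λᵢ ≤ √N ‖G - 1‖_F`, and
`x² ≥ 2x - 1` at `x = (1/N) ∑ √λᵢ` turns this into the bound.
-/

open Matrix Unitary Real

section Scalar

variable {ι : Type*} [Fintype ι]

lemma one_sub_sqrt_le_abs_sub_one {x : ℝ} (hx : 0 ≤ x) : 1 - √x ≤ |x - 1| := by
  have hfactor : x - 1 = (√x - 1) * (√x + 1) := by
    linear_combination -sq_sqrt hx
  rw [hfactor, abs_mul, abs_of_pos (by positivity : 0 < √x + 1)]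
  nlinarith [neg_abs_le (√x - 1), abs_nonneg (√x - 1), sqrt_nonneg x]

lemma sum_abs_le_sqrt_card_mul_sqrt_sum_sq (f : ι → ℝ) :
    ∑ i, |f i| ≤ √(Fintype.card ι) * √(∑ i, f i ^ 2) := by
  rw [← sqrt_mul (Nat.cast_nonneg _)]
  apply le_sqrt_of_sq_le
  simpa using sq_sum_le_card_mul_sum_sq (s := Finset.univ) (f := fun i => |f i|)

lemma card_sub_sum_sqrt_le {lam : ι → ℝ} (hlam : ∀ i, 0 ≤ lam i) :
    Fintype.card ι - ∑ i, √(lam i) ≤ √(Fintype.card ι) * √(∑ i, (lam i - 1) ^ 2) :=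
  calc (Fintype.card ι : ℝ) - ∑ i, √(lam i) = ∑ i, (1 - √(lam i)) := by simp
    _ ≤ ∑ i, |lam i - 1| := Finset.sum_le_sum fun i _ => one_sub_sqrt_le_abs_sub_one (hlam i)
    _ ≤ _ := sum_abs_le_sqrt_card_mul_sqrt_sum_sq _

lemma one_sub_two_div_sqrt_card_mul_le_sq_mean_sqrt [Nonempty ι] {lam : ι → ℝ}
    (hlam : ∀ i, 0 ≤ lam i) :
    1 - 2 / √(Fintype.card ι) * √(∑ i, (lam i - 1) ^ 2)
      ≤ (1 / (Fintype.card ι : ℝ) * ∑ i, √(lam i)) ^ 2 := by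
  set c : ℝ := (Fintype.card ι : ℝ)
  set s := ∑ i, √(lam i)
  have hc : 0 < c := Nat.cast_pos.2 Fintype.card_pos
  calc 1 - 2 / √c * √(∑ i, (lam i - 1) ^ 2) = 1 - 2 * (√c * √(∑ i, (lam i - 1) ^ 2)) / c := by
        congr 1; field_simp; rw [sq_sqrt hc.le, mul_comm]
    _ ≤ 1 - 2 * (c - s) / c := by gcongr; exact card_sub_sum_sqrt_le hlam
    _ = 2 * (1 / c * s) - 1 := by field_simp; ring
    _ ≤ (1 / c * s) ^ 2 := by nlinarith [sq_nonneg (1 / c * s - 1)]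

end Scalar

section Matrix

variable {n : Type*} [Fintype n]

lemma re_trace (M : Matrix n n ℂ) : M.trace.re = ∑ i, (M i i).re := by
  simp [Matrix.trace, Complex.re_sum]

lemma sum_sum_norm_sq_eq_re_trace {m : Type*} [Fintype m] (M : Matrix m n ℂ) :
    ∑ i, ∑ j, ‖M i j‖ ^ 2 = (Mᴴ * M).trace.re := by
  rw [re_trace, Finset.sum_comm]
  simp [Matrix.mul_apply, Complex.re_sum, Complex.mul_re, Complex.sq_norm, Complex.normSq_apply]

variable [DecidableEq n]

lemma trace_conjStarAlgAut (U : unitary (Matrix n n ℂ)) (X : Matrix n n ℂ) :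
    (conjStarAlgAut ℂ _ U X).trace = X.trace := by
  rw [conjStarAlgAut_apply, trace_mul_cycle, coe_star_mul_self, Matrix.one_mul]

lemma frobNorm_conjStarAlgAut (U : unitary (Matrix n n ℂ)) (X : Matrix n n ℂ) :
    frobNorm (conjStarAlgAut ℂ _ U X) = frobNorm X := by
  rw [frobNorm, frobNorm, sum_sum_norm_sq_eq_re_trace, sum_sum_norm_sq_eq_re_trace,
    ← star_eq_conjTranspose, ← map_star, ← map_mul, trace_conjStarAlgAut, star_eq_conjTranspose]

lemma frobNorm_diagonal (d : n → ℂ) : frobNorm (diagonal d) = √(∑ i, ‖d i‖ ^ 2) := by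
  simp [frobNorm, diagonal_apply, apply_ite]

lemma trace_psdSqrt {A : Matrix n n ℂ} (hA : A.PosSemidef) :
    (psdSqrt hA).trace = ∑ i, ((√(hA.1.eigenvalues i) : ℝ) : ℂ) := by
  change (conjStarAlgAut ℂ _ hA.1.eigenvectorUnitary _).trace = _
  rw [trace_conjStarAlgAut, trace_diagonal]
  rfl

lemma frobNorm_sub_one_of_isHermitian {A : Matrix n n ℂ} (hA : A.IsHermitian) :
    frobNorm (A - 1) = √(∑ i, (hA.eigenvalues i - 1) ^ 2) := by
  conv_lhs => rw [hA.spectral_theorem, ← map_one (conjStarAlgAut ℂ _ hA.eigenvectorUnitary),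
    ← map_sub, ← diagonal_one, diagonal_sub, frobNorm_conjStarAlgAut, frobNorm_diagonal]
  congr 1
  refine Finset.sum_congr rfl fun i _ => ?_
  rw [Function.comp_apply, RCLike.ofReal_eq_complex_ofReal, ← Complex.ofReal_one,
    ← Complex.ofReal_sub, Complex.norm_real, Real.norm_eq_abs, sq_abs]

end Matrix

/-- For an N×N positive semidefinite matrix G,
(1/N)∑_u ((√G)_{uu})² ≥ ((1/N)·Tr √G)² = ((1/N)·∑_u √λ_u)² ≥ 1 − (2/√N)·‖G − I‖_F. -/
theorem pgm_gram_bound (N : ℕ) (hN : 1 ≤ N)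
    (G : Matrix (Fin N) (Fin N) ℂ) (hG : G.PosSemidef) :
    (1/(N:ℝ)) * ∑ u, (((psdSqrt hG) u u).re)^2 ≥ ((1/(N:ℝ)) * ((psdSqrt hG).trace).re)^2 ∧
    ((1/(N:ℝ)) * ((psdSqrt hG).trace).re)^2
      = ((1/(N:ℝ)) * ∑ u, Real.sqrt (hG.1.eigenvalues u))^2 ∧
    ((1/(N:ℝ)) * ((psdSqrt hG).trace).re)^2 ≥ 1 - (2/Real.sqrt N) * frobNorm (G - 1) := by
  have htrace : ((psdSqrt hG).trace).re = ∑ u, √(hG.1.eigenvalues u) := by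
    simp [trace_psdSqrt, Complex.re_sum]
  have : Nonempty (Fin N) := ⟨⟨0, hN⟩⟩
  refine ⟨?_, by rw [htrace], ?_⟩
  · simpa [re_trace, div_eq_inv_mul] using
      sum_div_card_sq_le_sum_sq_div_card (s := Finset.univ) (f := fun u => (psdSqrt hG u u).re)
  · rw [htrace, frobNorm_sub_one_of_isHermitian hG.1]
    simpa using one_sub_two_div_sqrt_card_mul_le_sq_mean_sqrt hG.eigenvalues_nonneg

end IQ
end
end

section
/- Let |ψ⟩ = (α, β) be a unit vector in ℂ². Then (1/4)·( |⟨ψ|α₀₀⟩|⁴ + |⟨ψ|α₀₁⟩|⁴ + |⟨ψ|α₁₀⟩|⁴ + |⟨ψ|α₁₁⟩|⁴ ) = (1/8)·( 2 + |α² + β²|² ) ≤ 3/8. -/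
open scoped BigOperators ComplexOrder

noncomputable section

namespace IQ

/-! With `c = α β̄`, the Hadamard overlaps are `|α ± β|² / 2 = (‖ψ‖² ± 2 Re c) / 2` and
`|α² + β²|² = ‖ψ‖⁴ - 4 (Im c)²`; since `(Re c)² + (Im c)² = |α|² |β|²`, the mean of the
four fourth powers is `(3 ‖ψ‖⁴ - 4 (Im c)²) / 8`, which for a unit vector gives both the
identity and the bound `3/8`. -/

open ComplexConjugate Complex

lemma overlap_ket00 (α β : ℂ) : conj α * ket00 0 + conj β * ket00 1 = conj α := by
  simp [ket00]

lemma overlap_ket11 (α β : ℂ) : conj α * ket11 0 + conj β * ket11 1 = conj β := by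
  simp [ket11]

lemma normSq_inv_sqrt_two : normSq ((Real.sqrt 2 : ℂ)⁻¹) = 1 / 2 := by
  rw [map_inv₀, normSq_ofReal, Real.mul_self_sqrt zero_le_two, one_div]

lemma normSq_overlap_ketP (α β : ℂ) :
    normSq (conj α * ketP 0 + conj β * ketP 1) = normSq (α + β) / 2 := by
  have hP : conj α * ketP 0 + conj β * ketP 1 = conj (α + β) * (Real.sqrt 2 : ℂ)⁻¹ := by
    simp only [ketP, Matrix.cons_val_zero, Matrix.cons_val_one, map_add]
    ring
  rw [hP, normSq_mul, normSq_conj, normSq_inv_sqrt_two, mul_one_div]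

lemma normSq_overlap_ketM (α β : ℂ) :
    normSq (conj α * ketM 0 + conj β * ketM 1) = normSq (α - β) / 2 := by
  have hM : conj α * ketM 0 + conj β * ketM 1 = conj (α - β) * (Real.sqrt 2 : ℂ)⁻¹ := by
    simp only [ketM, Matrix.cons_val_zero, Matrix.cons_val_one, map_sub]
    ring
  rw [hM, normSq_mul, normSq_conj, normSq_inv_sqrt_two, mul_one_div]

lemma re_sq_add_im_sq_mul_conj (α β : ℂ) :
    (α * conj β).re ^ 2 + (α * conj β).im ^ 2 = normSq α * normSq β := by
  rw [← normSq_conj β, ← normSq_mul, normSq_apply]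
  ring

lemma normSq_sq_add_sq (α β : ℂ) :
    normSq (α ^ 2 + β ^ 2) = (normSq α + normSq β) ^ 2 - 4 * (α * conj β).im ^ 2 := by
  have hcross : (α ^ 2 * conj (β ^ 2)).re = (α * conj β).re ^ 2 - (α * conj β).im ^ 2 := by
    rw [map_pow, ← mul_pow, sq, mul_re, ← sq, ← sq]
  rw [normSq_add, hcross, map_pow, map_pow]
  linear_combination 2 * re_sq_add_im_sq_mul_conj α β

lemma sum_normSq_overlap_sq (α β : ℂ) :
    normSq (conj α * ket00 0 + conj β * ket00 1) ^ 2
        + normSq (conj α * ketP 0 + conj β * ketP 1) ^ 2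
        + normSq (conj α * ketM 0 + conj β * ketM 1) ^ 2
        + normSq (conj α * ket11 0 + conj β * ket11 1) ^ 2
      = (3 * (normSq α + normSq β) ^ 2 - 4 * (α * conj β).im ^ 2) / 2 := by
  rw [overlap_ket00, overlap_ket11, normSq_overlap_ketP, normSq_overlap_ketM,
    normSq_conj, normSq_conj, normSq_add, normSq_sub]
  linear_combination 2 * re_sq_add_im_sq_mul_conj α β

/-- For a unit vector |ψ⟩ = (α,β) ∈ ℂ²,
(1/4)(|⟨ψ|α₀₀⟩|⁴ + |⟨ψ|α₀₁⟩|⁴ + |⟨ψ|α₁₀⟩|⁴ + |⟨ψ|α₁₁⟩|⁴)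
  = (1/8)(2 + |α² + β²|²) ≤ 3/8. -/
theorem fourth_moment_bound (α β : ℂ) (h : ‖α‖^2 + ‖β‖^2 = 1) :
    (1/4 : ℝ) *
        (‖(starRingEnd ℂ) α * ket00 0 + (starRingEnd ℂ) β * ket00 1‖^4
          + ‖(starRingEnd ℂ) α * ketP 0 + (starRingEnd ℂ) β * ketP 1‖^4
          + ‖(starRingEnd ℂ) α * ketM 0 + (starRingEnd ℂ) β * ketM 1‖^4
          + ‖(starRingEnd ℂ) α * ket11 0 + (starRingEnd ℂ) β * ket11 1‖^4)
      = (1/8 : ℝ) * (2 + ‖α^2 + β^2‖^2) ∧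
    (1/8 : ℝ) * (2 + ‖α^2 + β^2‖^2) ≤ 3/8 := by
  have pow_four (z : ℂ) : ‖z‖ ^ 4 = normSq z ^ 2 := by rw [← Complex.sq_norm, ← pow_mul]
  simp only [pow_four, Complex.sq_norm] at h ⊢
  rw [sum_normSq_overlap_sq, normSq_sq_add_sq, h]
  constructor
  · ring
  · linarith [sq_nonneg (α * conj β).im]

end IQ
end
end

section
/- Let p_e := sin²(π/8). Fix constants λ ≥ 1, 0 < τ ≤ 1/2 − p_e, and θ > τ·h'(p_e), where h is the binary entropy function and h'(p) = lg((1−p)/p). Set k := n·(1 − h(p_e) − θ) and r := n·(p_e + τ). Let C : {0,1}^k → {0,1}^n be a random code whose 2^k codewords are independent and uniform on {0,1}^n; let S be uniform on {0,1}^k; let Z ∈ {0,1}^n be obtained from C(S) by flipping each bit independently with probability p_e; and let Ŝ be any decoder that outputs some t ∈ {0,1}^k with Hamming distance d_H(C(t), Z) ≤ r whenever such t exists (ties broken arbitrarily). Then for all sufficiently large n, with probability at least 1 − 1/λ over the choice of C, Pr[Ŝ = S] ≥ 1 − λ·[ e^{−2τ²n} + 2^{−n(θ − τ·h'(p_e))}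 ]. -/
open scoped BigOperators ComplexOrder

noncomputable section

namespace IQ

/-- Hamming distance on bit strings -/
def hamm {n : ℕ} (x y : Fin n → Fin 2) : ℕ :=
  (Finset.univ.filter fun a => x a ≠ y a).card


/-!
Random coding with bounded-distance decoding at radius `r = n (p + τ)`. Fix a message `s` and a
noise pattern `e`. Decoding can fail only if `e` has weight above `r`, which BSC(p) produces with
probability at most `exp (-2τ²n)` (Chernoff), or if some other codeword lands in the radius-`r`
ball around the received word. Distinct codewords of a uniformly random code differ by a uniform
word, so by the union bound the latter has probability at most
`2 ^ k · |ball| / 2 ^ n ≤ 2 ^ (n (1 - h(p) - θ)) · 2 ^ (n h(p + τ)) / 2 ^ n`, and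
`h(p + τ) ≤ h(p) + τ h'(p)` by concavity. This bounds the expected decoding error over the code;
Markov's inequality then bounds it by `λ` times as much for all but a `1/λ` fraction of codes.
-/

open Finset Real

section FiniteProbability

variable {α : Type*} [Fintype α]

lemma prFin_eq_card_div (P : α → Prop) [DecidablePred P] :
    prFin P = #{a | P a} / Fintype.card α := by
  unfold prFin
  congr

lemma prFin_le_one (P : α → Prop) : prFin P ≤ 1 := by
  classical
  rw [prFin_eq_card_div]
  exact div_le_one_of_le₀ (by exact_mod_cast (card_filter_le _ _).trans_eq card_univ)
    (Nat.cast_nonneg _)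

lemma one_sub_inv_le_prFin_of_expFin_le [Nonempty α] {F : α → ℝ} (hF : ∀ a, 0 ≤ F a)
    {c B : ℝ} (hc : 0 < c) (hB : 0 < B) (hFB : expFin F ≤ B) :
    1 - 1 / c ≤ prFin (fun a => F a ≤ c * B) := by
  classical
  have hN : (0 : ℝ) < Fintype.card α := by exact_mod_cast Fintype.card_pos
  have hbad : (#{a | ¬F a ≤ c * B} : ℝ) * (c * B) ≤ Fintype.card α * B :=
    calc (#{a | ¬F a ≤ c * B} : ℝ) * (c * B)
        ≤ ∑ a with ¬F a ≤ c * B, F a := by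
          rw [← nsmul_eq_mul]
          exact card_nsmul_le_sum _ _ _ fun a ha => (not_le.1 (mem_filter.1 ha).2).le
      _ ≤ ∑ a, F a := sum_le_sum_of_subset_of_nonneg (filter_subset _ _) fun a _ _ => hF a
      _ ≤ Fintype.card α * B := by rwa [expFin, div_le_iff₀ hN, mul_comm] at hFB
  have hgood : (#{a | F a ≤ c * B} : ℝ) = Fintype.card α - #{a | ¬F a ≤ c * B} := by
    rw [eq_sub_iff_add_eq, ← Nat.cast_add, card_filter_add_card_filter_not, card_univ]
  rw [prFin_eq_card_div, hgood, sub_div, div_self hN.ne', sub_le_sub_iff_left,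
    div_le_div_iff₀ hN hc, one_mul]
  nlinarith

end FiniteProbability

open MeasureTheory ProbabilityTheory in
/-- Hoeffding's lemma for a Bernoulli(p) variable. -/
lemma one_sub_add_mul_exp_le {p : ℝ} (hp0 : 0 ≤ p) (hp1 : p ≤ 1) {t : ℝ} (ht : 0 < t) :
    1 - p + p * exp t ≤ exp (t * p + t ^ 2 / 8) := by
  set μ : Measure ℝ := bernoulliMeasure 1 0 ⟨p, hp0, hp1⟩
  have hint (f : ℝ → ℝ) : ∫ x, f x ∂μ = p * f 1 + (1 - p) * f 0 := by
    simp [μ, integral_bernoulliMeasure]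
  have hmgf := ProbabilityTheory.mgf_le_of_mem_Icc_of_integral_eq_zero (μ := μ)
    (X := fun x => x - p) (a := -p) (b := 1 - p) (by fun_prop) ?_ ?_ ht
  · simp only [mgf, hint] at hmgf
    norm_num at hmgf
    have h1 : exp (t * p) * exp (t * (1 - p)) = exp t := by rw [← exp_add]; ring_nf
    have h0 : exp (t * p) * exp (-(t * p)) = 1 := by rw [← exp_add, add_neg_cancel, exp_zero]
    calc 1 - p + p * exp t
        = exp (t * p) * (p * exp (t * (1 - p)) + (1 - p) * exp (-(t * p))) := by
          linear_combination (-p) * h1 - (1 - p) * h0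
      _ ≤ exp (t * p) * exp (1 / 4 * t ^ 2 / 2) := by gcongr
      _ = exp (t * p + t ^ 2 / 8) := by rw [← exp_add]; ring_nf
  · simp only [μ, bernoulliMeasure_def, ae_add_measure_iff]
    constructor
    · exact Measure.ae_smul_measure (by simp) _
    · exact Measure.ae_smul_measure (by simp) _
  · rw [hint]; ring

section BitStrings

variable {n : ℕ}

lemma hamm_eq_hammingNorm_sub (x y : Fin n → Fin 2) : hamm x y = hammingNorm (x - y) := by
  show hammingDist x y = _
  rw [hammingDist_comm, hammingDist_eq_hammingNorm, neg_add_eq_sub]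

lemma hammingNorm_neg {ι β : Type*} [Fintype ι] [AddGroup β] [DecidableEq β] (x : ι → β) :
    hammingNorm (-x) = hammingNorm x := by
  simp [hammingNorm]

lemma prod_ite_eq_one_eq_pow {R : Type*} [CommMonoid R] (x y : R) (e : Fin n → Fin 2) :
    ∏ a, (if e a = 1 then x else y) = x ^ hammingNorm e * y ^ (n - hammingNorm e) := by
  have hnorm : #{a | e a = 1} = hammingNorm e := by
    have h01 : ∀ b : Fin 2, b = 1 ↔ b ≠ 0 := by decide
    exact congrArg card (filter_congr fun a _ => h01 (e a))
  rw [prod_ite, prod_const, prod_const, ← hnorm, filter_not,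
    card_sdiff_of_subset (filter_subset _ _), card_univ, Fintype.card_fin]

lemma sum_pow_hammingNorm_mul_pow {R : Type*} [CommSemiring R] (x y : R) :
    ∑ e : Fin n → Fin 2, x ^ hammingNorm e * y ^ (n - hammingNorm e) = (y + x) ^ n := by
  simp_rw [← prod_ite_eq_one_eq_pow]
  rw [← Fintype.prod_sum (fun _ b => if b = 1 then x else y)]
  simp

def bscProb (p : ℝ) (e : Fin n → Fin 2) : ℝ :=
  ∏ a, if e a = 1 then p else 1 - p

lemma bscProb_eq_pow (p : ℝ) (e : Fin n → Fin 2) :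
    bscProb p e = p ^ hammingNorm e * (1 - p) ^ (n - hammingNorm e) :=
  prod_ite_eq_one_eq_pow p (1 - p) e

lemma bscProb_nonneg {p : ℝ} (hp0 : 0 ≤ p) (hp1 : p ≤ 1) (e : Fin n → Fin 2) :
    0 ≤ bscProb p e :=
  prod_nonneg fun a _ => by split_ifs <;> linarith

lemma sum_bscProb (p : ℝ) : ∑ e : Fin n → Fin 2, bscProb p e = 1 := by
  simp [bscProb_eq_pow, sum_pow_hammingNorm_mul_pow]

lemma sum_bscProb_mul_exp (p l : ℝ) :
    ∑ e : Fin n → Fin 2, bscProb p e * exp (l * hammingNorm e) = (1 - p + p * exp l) ^ n := by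
  simp_rw [bscProb_eq_pow, mul_comm l, exp_nat_mul, mul_right_comm, ← mul_pow]
  exact sum_pow_hammingNorm_mul_pow _ _

/-- Chernoff bound for the weight of the BSC(p) noise, with the exponential tilt `exp (4τ w)`. -/
lemma sum_bscProb_hammingNorm_gt_le {p τ : ℝ} (hp0 : 0 ≤ p) (hp1 : p ≤ 1) (hτ : 0 < τ) :
    ∑ e : Fin n → Fin 2 with n * (p + τ) < hammingNorm e, bscProb p e
      ≤ exp (-2 * τ ^ 2 * n) :=
  calc ∑ e : Fin n → Fin 2 with n * (p + τ) < hammingNorm e, bscProb p e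
      ≤ ∑ e : Fin n → Fin 2 with n * (p + τ) < hammingNorm e,
          bscProb p e * exp (4 * τ * (hammingNorm e - n * (p + τ))) := by
        refine sum_le_sum fun e he => le_mul_of_one_le_right (bscProb_nonneg hp0 hp1 e) ?_
        have := (mem_filter.mp he).2
        exact one_le_exp (by nlinarith)
    _ ≤ ∑ e : Fin n → Fin 2, bscProb p e * exp (4 * τ * (hammingNorm e - n * (p + τ))) :=
        sum_le_sum_of_subset_of_nonneg (filter_subset _ _) fun e _ _ =>
          mul_nonneg (bscProb_nonneg hp0 hp1 e) (exp_pos _).le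
    _ = exp (-(4 * τ * (n * (p + τ)))) * (1 - p + p * exp (4 * τ)) ^ n := by
        rw [← sum_bscProb_mul_exp, mul_sum]
        refine sum_congr rfl fun e _ => ?_
        rw [mul_left_comm, ← exp_add]
        ring_nf
    _ ≤ exp (-(4 * τ * (n * (p + τ)))) * exp (4 * τ * p + (4 * τ) ^ 2 / 8) ^ n := by
        gcongr
        exact one_sub_add_mul_exp_le hp0 hp1 (by positivity)
    _ = exp (-2 * τ ^ 2 * n) := by
        rw [← exp_nat_mul, ← exp_add]
        ring_nf

lemma binEnt_mul_log_two (q : ℝ) :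
    binEnt q * log 2 = -(q * log q) - (1 - q) * log (1 - q) := by
  simp only [binEnt, logb]
  field_simp

/-- Every point of the ball carries BSC(q)-probability at least `2 ^ (-n h(q))`. -/
lemma card_filter_hammingNorm_le_le {q : ℝ} (hq0 : 0 < q) (hq : q ≤ 1 / 2) :
    (#{x : Fin n → Fin 2 | hammingNorm x ≤ n * q} : ℝ) ≤ 2 ^ (n * binEnt q) := by
  have hq1 : 0 < 1 - q := by linarith
  have hmin : ∀ x : Fin n → Fin 2, hammingNorm x ≤ n * q →
      (2 : ℝ) ^ (-(n * binEnt q)) ≤ bscProb q x := by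
    intro x hx
    have hw : hammingNorm x ≤ n := hammingNorm_le_card_fintype.trans_eq (Fintype.card_fin n)
    have hlog : log q ≤ log (1 - q) := log_le_log hq0 (by linarith)
    rw [bscProb_eq_pow, ← rpow_natCast, ← rpow_natCast, rpow_def_of_pos hq0,
      rpow_def_of_pos hq1, rpow_def_of_pos two_pos, ← exp_add, exp_le_exp, Nat.cast_sub hw]
    nlinarith [binEnt_mul_log_two q]
  have hsum := calc
    (#{x : Fin n → Fin 2 | hammingNorm x ≤ n * q} : ℝ) * 2 ^ (-(n * binEnt q))
        ≤ ∑ x : Fin n → Fin 2 with hammingNorm x ≤ n * q, bscProb q x := by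
          rw [← nsmul_eq_mul]
          exact card_nsmul_le_sum _ _ _ fun x hx => hmin x (mem_filter.mp hx).2
      _ ≤ ∑ x, bscProb q x := sum_le_sum_of_subset_of_nonneg (filter_subset _ _)
          fun x _ _ => bscProb_nonneg hq0.le (by linarith) x
      _ = 1 := sum_bscProb q
  rwa [rpow_neg two_pos.le, ← div_eq_mul_inv, div_le_one (by positivity)] at hsum

end BitStrings

lemma binEnt_eq_binEntropy_div (p : ℝ) : binEnt p = binEntropy p / log 2 := by
  simp only [binEnt, binEntropy, logb, log_inv]
  ring

lemma binEnt_le_add_mul_logb {p q : ℝ} (hp : 0 < p) (hpq : p < q) (hq : q ≤ 1) :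
    binEnt q ≤ binEnt p + (q - p) * logb 2 ((1 - p) / p) := by
  have hslope := strictConcave_binEntropy.concaveOn.slope_le_of_hasDerivAt
    ⟨hp.le, by linarith⟩ ⟨by linarith, hq⟩ hpq (hasDerivAt_binEntropy hp.ne' (by linarith))
  rw [slope_def_field, div_le_iff₀ (by linarith)] at hslope
  rw [binEnt_eq_binEntropy_div, binEnt_eq_binEntropy_div, logb, log_div (by linarith) hp.ne']
  calc binEntropy q / log 2 ≤ (binEntropy p + (q - p) * (log (1 - p) - log p)) / log 2 := by
        gcongr
        linarith
    _ = _ := by ring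

section RandomCodes

variable {K X : Type*} [Fintype K] [DecidableEq K] [Fintype X] [DecidableEq X]

lemma card_filter_apply_mem (t : K) (B : Finset X) :
    #{C : K → X | C t ∈ B} = #B * Fintype.card X ^ (Fintype.card K - 1) := by
  have hpi : ({C : K → X | C t ∈ B} : Finset (K → X))
      = Fintype.piFinset (Function.update (fun _ => univ) t B) := by
    ext C
    simp only [mem_filter, mem_univ, true_and, Fintype.mem_piFinset]
    refine ⟨fun h j => ?_, fun h => by simpa using h t⟩
    rcases eq_or_ne j t with rfl | hj
    · simpa using h
    · simp [hj]
  rw [hpi, Fintype.card_piFinset]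
  simp_rw [Function.apply_update (fun _ => card)]
  rw [prod_update_of_mem (mem_univ t), prod_const, card_univ_sdiff]
  simp

lemma card_filter_apply_sub_apply_mem [AddGroup X] {s t : K} (hst : s ≠ t) (B : Finset X) :
    #{C : K → X | C t - C s ∈ B} = #B * Fintype.card X ^ (Fintype.card K - 1) := by
  rw [← card_filter_apply_mem t B]
  refine card_nbij' (fun C => Function.update C t (C t - C s))
    (fun C => Function.update C t (C t + C s)) ?_ ?_ ?_ ?_ <;>
    intro C hC <;> simp_all

end RandomCodes

section Decoding

variable {M : Type*} [Fintype M] [DecidableEq M] {n : ℕ}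

def IsBoundedDistanceDecoder (dec : (M → Fin n → Fin 2) → (Fin n → Fin 2) → M) (r : ℝ) :
    Prop :=
  ∀ (C : M → Fin n → Fin 2) (z : Fin n → Fin 2),
    (∃ t, (hamm (C t) z : ℝ) ≤ r) → (hamm (C (dec C z)) z : ℝ) ≤ r

/-- The probability that `dec` fails when a uniform message is encoded by `C` and sent over
BSC(p). -/
def decodingError (dec : (M → Fin n → Fin 2) → (Fin n → Fin 2) → M) (p : ℝ)
    (C : M → Fin n → Fin 2) : ℝ :=
  ∑ s, ∑ e, (Fintype.card M : ℝ)⁻¹ * bscProb p e * (if dec C (C s + e) = s then 0 else 1)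

variable (dec : (M → Fin n → Fin 2) → (Fin n → Fin 2) → M)

lemma decodingError_nonneg {p : ℝ} (hp0 : 0 ≤ p) (hp1 : p ≤ 1) (C : M → Fin n → Fin 2) :
    0 ≤ decodingError dec p C :=
  sum_nonneg fun s _ => sum_nonneg fun e _ =>
    mul_nonneg (mul_nonneg (by positivity) (bscProb_nonneg hp0 hp1 e)) (by split_ifs <;> norm_num)

lemma sum_success_eq_one_sub_decodingError [Nonempty M] (p : ℝ) (C : M → Fin n → Fin 2) :
    ∑ s, ∑ e, (Fintype.card M : ℝ)⁻¹ * bscProb p e * (if dec C (C s + e) = s then 1 else 0)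
      = 1 - decodingError dec p C := by
  have hM : (Fintype.card M : ℝ) ≠ 0 := by positivity
  have hmessage (s : M) :
      ∑ e, (Fintype.card M : ℝ)⁻¹ * bscProb p e * (if dec C (C s + e) = s then 1 else 0)
        + ∑ e, (Fintype.card M : ℝ)⁻¹ * bscProb p e * (if dec C (C s + e) = s then 0 else 1)
        = (Fintype.card M : ℝ)⁻¹ :=
    calc _ = ∑ e, (Fintype.card M : ℝ)⁻¹ * bscProb p e := by
          rw [← sum_add_distrib]
          exact sum_congr rfl fun e _ => by split_ifs <;> ring
      _ = _ := by rw [← mul_sum, sum_bscProb, mul_one]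
  rw [eq_sub_iff_add_eq, decodingError, ← sum_add_distrib, sum_congr rfl fun s _ => hmessage s,
    sum_const, card_univ, nsmul_eq_mul, mul_inv_cancel₀ hM]

variable {dec} {r : ℝ}

/-- Union bound over the wrong messages `t`: decoding fails only if `C t` lands within
distance `r` of the received word. -/
lemma card_filter_decode_ne_le (hdec : IsBoundedDistanceDecoder dec r) (s : M)
    {e : Fin n → Fin 2} (he : (hammingNorm e : ℝ) ≤ r) :
    #{C : M → Fin n → Fin 2 | dec C (C s + e) ≠ s}
      ≤ (Fintype.card M - 1) * #{x : Fin n → Fin 2 | hammingNorm x ≤ r}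
          * Fintype.card (Fin n → Fin 2) ^ (Fintype.card M - 1) := by
  set B : Finset (Fin n → Fin 2) := {y | (hammingNorm (y - e) : ℝ) ≤ r}
  have hsub : ({C : M → Fin n → Fin 2 | dec C (C s + e) ≠ s} : Finset _)
      ⊆ (univ.erase s).biUnion fun t => {C | C t - C s ∈ B} := by
    intro C hC
    have hs : (hamm (C s) (C s + e) : ℝ) ≤ r := by
      rwa [hamm_eq_hammingNorm_sub, sub_add_cancel_left, hammingNorm_neg]
    have hdecC := hdec C (C s + e) ⟨s, hs⟩
    rw [hamm_eq_hammingNorm_sub, ← sub_sub] at hdecC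
    exact mem_biUnion.2
      ⟨_, mem_erase.2 ⟨(mem_filter.1 hC).2, mem_univ _⟩, by simpa [B] using hdecC⟩
  have hB : #B = #{x : Fin n → Fin 2 | hammingNorm x ≤ r} :=
    card_equiv (Equiv.subRight e) (by simp [B])
  calc #{C : M → Fin n → Fin 2 | dec C (C s + e) ≠ s}
      ≤ ∑ t ∈ univ.erase s, #{C : M → Fin n → Fin 2 | C t - C s ∈ B} :=
        (card_le_card hsub).trans card_biUnion_le
    _ = _ := by
        rw [sum_congr rfl fun t ht => card_filter_apply_sub_apply_mem (ne_of_mem_erase ht).symm B,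
          sum_const, card_erase_of_mem (mem_univ s), card_univ, hB, smul_eq_mul, mul_assoc]

lemma expFin_decodingError (p : ℝ) :
    expFin (decodingError dec p)
      = ∑ s, ∑ e,
          (Fintype.card M : ℝ)⁻¹ * bscProb p e * prFin fun C => dec C (C s + e) ≠ s := by
  classical
  simp only [expFin, decodingError, prFin_eq_card_div, sum_div]
  rw [sum_comm]
  refine sum_congr rfl fun s _ => ?_
  rw [sum_comm]
  refine sum_congr rfl fun e _ => ?_
  rw [← sum_div, ← mul_sum, mul_div_assoc]
  simp [sum_ite]

variable [Nonempty M]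

lemma prFin_decode_ne_le (hdec : IsBoundedDistanceDecoder dec r) (s : M)
    {e : Fin n → Fin 2} (he : (hammingNorm e : ℝ) ≤ r) :
    prFin (fun C : M → Fin n → Fin 2 => dec C (C s + e) ≠ s)
      ≤ (Fintype.card M - 1 : ℕ) * #{x : Fin n → Fin 2 | hammingNorm x ≤ r} / 2 ^ n := by
  have hcard := card_filter_decode_ne_le hdec s he
  have hN : (Fintype.card (M → Fin n → Fin 2) : ℝ)
      = (Fintype.card (Fin n → Fin 2) : ℝ) ^ (Fintype.card M - 1) * 2 ^ n := by
    rw [Fintype.card_fun, Nat.cast_pow, ← pow_sub_one_mul Fintype.card_pos.ne']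
    simp
  rw [prFin_eq_card_div, div_le_div_iff₀ (by positivity) (by positivity), hN, ← mul_assoc]
  gcongr
  exact_mod_cast hcard

lemma expFin_decodingError_le {p : ℝ} (hp0 : 0 ≤ p) (hp1 : p ≤ 1)
    (hdec : IsBoundedDistanceDecoder dec r) :
    expFin (decodingError dec p)
      ≤ ∑ e : Fin n → Fin 2 with r < hammingNorm e, bscProb p e
        + (Fintype.card M - 1 : ℕ) * #{x : Fin n → Fin 2 | hammingNorm x ≤ r} / 2 ^ n := by
  set c : ℝ := (Fintype.card M - 1 : ℕ) * #{x : Fin n → Fin 2 | hammingNorm x ≤ r} / 2 ^ n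
  have hpoint : ∀ s e, (prFin fun C : M → Fin n → Fin 2 => dec C (C s + e) ≠ s)
      ≤ (if r < hammingNorm e then 1 else 0) + c := by
    intro s e
    split_ifs with he
    · exact (prFin_le_one _).trans (le_add_of_nonneg_right (by positivity))
    · exact (prFin_decode_ne_le hdec s (not_lt.1 he)).trans_eq (zero_add c).symm
  have hnoise : ∑ e : Fin n → Fin 2, bscProb p e * ((if r < hammingNorm e then 1 else 0) + c)
      = ∑ e : Fin n → Fin 2 with r < hammingNorm e, bscProb p e + c := by
    simp only [mul_add, mul_ite, mul_one, mul_zero, sum_add_distrib, ← sum_mul, sum_bscProb,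
      one_mul, sum_filter]
  have hM : (Fintype.card M : ℝ) ≠ 0 := by positivity
  rw [expFin_decodingError]
  calc ∑ s, ∑ e,
        (Fintype.card M : ℝ)⁻¹ * bscProb p e * prFin (fun C => dec C (C s + e) ≠ s)
      ≤ ∑ s : M, ∑ e, (Fintype.card M : ℝ)⁻¹ * bscProb p e
          * ((if r < hammingNorm e then 1 else 0) + c) := by
        gcongr with s _ e _
        · exact mul_nonneg (by positivity) (bscProb_nonneg hp0 hp1 e)
        · exact hpoint s e
    _ = ∑ s : M, (Fintype.card M : ℝ)⁻¹
          * (∑ e : Fin n → Fin 2 with r < hammingNorm e, bscProb p e + c) := by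
        simp only [mul_assoc, ← mul_sum, hnoise]
    _ = _ := by rw [sum_const, card_univ, nsmul_eq_mul, mul_inv_cancel_left₀ hM]

end Decoding

lemma two_pow_floor_sub_one_le (x : ℝ) : ((2 ^ ⌊x⌋₊ - 1 : ℕ) : ℝ) ≤ 2 ^ x := by
  rcases le_or_gt 0 x with hx | hx
  · calc ((2 ^ ⌊x⌋₊ - 1 : ℕ) : ℝ) ≤ (2 : ℝ) ^ (⌊x⌋₊ : ℝ) := by
          rw [rpow_natCast]; exact_mod_cast Nat.sub_le _ _
      _ ≤ 2 ^ x := rpow_le_rpow_of_exponent_le one_le_two (Nat.floor_le hx)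
  · simp [Nat.floor_of_nonpos hx.le, rpow_nonneg]

lemma expFin_decodingError_le_of_rate {p τ θ : ℝ} (hp : 0 < p) (hτ : 0 < τ)
    (hpτ : p + τ ≤ 1 / 2)
    {n k : ℕ} (hk : k = ⌊n * (1 - binEnt p - θ)⌋₊)
    {dec : ((Fin k → Fin 2) → Fin n → Fin 2) → (Fin n → Fin 2) → (Fin k → Fin 2)}
    (hdec : IsBoundedDistanceDecoder dec (n * (p + τ))) :
    expFin (decodingError dec p)
      ≤ exp (-2 * τ ^ 2 * n) + 2 ^ (-n * (θ - τ * logb 2 ((1 - p) / p))) := by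
  refine (expFin_decodingError_le hp.le (by linarith) hdec).trans
    (add_le_add (sum_bscProb_hammingNorm_gt_le hp.le (by linarith) hτ) ?_)
  have hM : Fintype.card (Fin k → Fin 2) = 2 ^ ⌊n * (1 - binEnt p - θ)⌋₊ := by simp [hk]
  have hrate := two_pow_floor_sub_one_le (n * (1 - binEnt p - θ))
  have hball := card_filter_hammingNorm_le_le (n := n) (by linarith : 0 < p + τ) hpτ
  have htangent := binEnt_le_add_mul_logb hp (lt_add_of_pos_right p hτ) (by linarith)
  rw [hM]
  calc ((2 ^ ⌊n * (1 - binEnt p - θ)⌋₊ - 1 : ℕ) : ℝ)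
        * #{x : Fin n → Fin 2 | hammingNorm x ≤ n * (p + τ)} / 2 ^ n
      ≤ 2 ^ (n * (1 - binEnt p - θ)) * 2 ^ (n * binEnt (p + τ)) / 2 ^ n := by gcongr
    _ = 2 ^ (n * (1 - binEnt p - θ) + n * binEnt (p + τ) - n) := by
        rw [rpow_sub two_pos, rpow_add two_pos, rpow_natCast]
    _ ≤ 2 ^ (-n * (θ - τ * logb 2 ((1 - p) / p))) := by
        refine rpow_le_rpow_of_exponent_le one_le_two ?_
        rw [add_sub_cancel_left] at htangent
        nlinarith [mul_le_mul_of_nonneg_left htangent (Nat.cast_nonneg n)]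

theorem noisy_coding_general (lam τ θ : ℝ) (hlam : 1 ≤ lam) (hτ0 : 0 < τ)
    (hτ : τ ≤ 1/2 - Real.sin (Real.pi/8)^2) :
    ∃ N₀ : ℕ, ∀ n : ℕ, N₀ ≤ n →
    ∀ k : ℕ, k = Nat.floor ((n:ℝ) * (1 - binEnt (Real.sin (Real.pi/8)^2) - θ)) →
    ∀ dec : ((Fin k → Fin 2) → Fin n → Fin 2) → (Fin n → Fin 2) → (Fin k → Fin 2),
      (∀ (code : (Fin k → Fin 2) → Fin n → Fin 2) (z : Fin n → Fin 2),
        (∃ t : Fin k → Fin 2, (hamm (code t) z : ℝ) ≤ n * (Real.sin (Real.pi/8)^2 + τ)) →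
        (hamm (code (dec code z)) z : ℝ) ≤ n * (Real.sin (Real.pi/8)^2 + τ)) →
    prFin (fun code : (Fin k → Fin 2) → Fin n → Fin 2 =>
      (∑ s : Fin k → Fin 2, ∑ e : Fin n → Fin 2,
        ((2:ℝ)^k)⁻¹
          * (∏ a, if e a = 1 then Real.sin (Real.pi/8)^2 else 1 - Real.sin (Real.pi/8)^2)
          * (if dec code (fun a => code s a + e a) = s then (1:ℝ) else 0))
        ≥ 1 - lam * (Real.exp (-2*τ^2*n)
            + (2:ℝ)^(-(n:ℝ) * (θ - τ * Real.logb 2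
                ((1 - Real.sin (Real.pi/8)^2) / Real.sin (Real.pi/8)^2)))))
    ≥ 1 - 1/lam := by
  set p := sin (π / 8) ^ 2
  have hp : 0 < p := pow_pos (sin_pos_of_pos_of_lt_pi (by positivity) (by linarith [pi_pos])) 2
  refine ⟨0, fun n _ k hk dec hdec => ?_⟩
  have herr := expFin_decodingError_le_of_rate hp hτ0 (by linarith) hk hdec
  have hsuccess (C : (Fin k → Fin 2) → Fin n → Fin 2) :
      ∑ s : Fin k → Fin 2, ∑ e : Fin n → Fin 2, ((2:ℝ)^k)⁻¹
          * (∏ a, if e a = 1 then p else 1 - p)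
          * (if dec C (fun a => C s a + e a) = s then (1:ℝ) else 0)
        = 1 - decodingError dec p C := by
    have hM : (Fintype.card (Fin k → Fin 2) : ℝ) = 2 ^ k := by simp
    have := sum_success_eq_one_sub_decodingError dec p C
    rwa [hM] at this
  simp_rw [hsuccess, ge_iff_le, sub_le_sub_iff_left]
  exact one_sub_inv_le_prFin_of_expFin_le (decodingError_nonneg dec hp.le (by linarith))
    (by linarith) (by positivity) herr

/-- Shannon's noisy coding theorem for the BSC(p_e), p_e = sin²(π/8),
with a random code of rate 1 − h(p_e) − θ and bounded-distance decoding at radius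
n(p_e + τ): with probability ≥ 1 − 1/λ over the code C,
Pr[Ŝ = S] ≥ 1 − λ(e^{−2τ²n} + 2^{−n(θ − τh'(p_e))}). -/
theorem noisy_coding (lam τ θ : ℝ) (hlam : 1 ≤ lam) (hτ0 : 0 < τ)
    (hτ : τ ≤ 1/2 - Real.sin (Real.pi/8)^2)
    (hθ : τ * Real.logb 2 ((1 - Real.sin (Real.pi/8)^2) / Real.sin (Real.pi/8)^2) < θ) :
    ∃ N₀ : ℕ, ∀ n : ℕ, N₀ ≤ n →
    ∀ k : ℕ, k = Nat.floor ((n:ℝ) * (1 - binEnt (Real.sin (Real.pi/8)^2) - θ)) →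
    ∀ dec : ((Fin k → Fin 2) → Fin n → Fin 2) → (Fin n → Fin 2) → (Fin k → Fin 2),
      (∀ (code : (Fin k → Fin 2) → Fin n → Fin 2) (z : Fin n → Fin 2),
        (∃ t : Fin k → Fin 2, (hamm (code t) z : ℝ) ≤ n * (Real.sin (Real.pi/8)^2 + τ)) →
        (hamm (code (dec code z)) z : ℝ) ≤ n * (Real.sin (Real.pi/8)^2 + τ)) →
    prFin (fun code : (Fin k → Fin 2) → Fin n → Fin 2 =>
      (∑ s : Fin k → Fin 2, ∑ e : Fin n → Fin 2,
        ((2:ℝ)^k)⁻¹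
          * (∏ a, if e a = 1 then Real.sin (Real.pi/8)^2 else 1 - Real.sin (Real.pi/8)^2)
          * (if dec code (fun a => code s a + e a) = s then (1:ℝ) else 0))
        ≥ 1 - lam * (Real.exp (-2*τ^2*n)
            + (2:ℝ)^(-(n:ℝ) * (θ - τ * Real.logb 2
                ((1 - Real.sin (Real.pi/8)^2) / Real.sin (Real.pi/8)^2)))))
    ≥ 1 - 1/lam :=
  noisy_coding_general lam τ θ hlam hτ0 hτ

end IQ
end
end
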